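/- arXiv:1811.01256 — 9 statements merged into one kernel-verified Lean document; each statement's English description precedes it below -/
import Mathlib

section
/- Every integer has a unique representation in base −p with digit set {0, 1, …, p−1}; that is, for every integer m there exist unique k ≥ 0 and digits d_0, …, d_{k−1} ∈ {0, …, p−1} with d_{k−1} ≠ 0 (or k = 0 when m = 0) such that m = Σ_{i<k} d_i (−p)^i. -/
/-- The value of a digit list `L` (least significant digit first) in base `-p`. -/
def negBaseVal (p : ℤ) (L : List ℕ) : ℤ :=
  ∑ i ∈ Finset.range L.length, (L.getD i 0 : ℤ) * (-p) ^ i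

lemma negBaseVal_nil (p : ℤ) : negBaseVal p [] = 0 := by simp [negBaseVal]

lemma negBaseVal_cons (p : ℤ) (d : ℕ) (T : List ℕ) :
    negBaseVal p (d :: T) = d + (-p) * negBaseVal p T := by
  unfold negBaseVal
  rw [List.length_cons, Finset.sum_range_succ']
  simp only [List.getD_cons_succ, List.getD_cons_zero, pow_zero, mul_one, pow_succ,
    Finset.mul_sum]
  rw [add_comm]
  congr 1
  apply Finset.sum_congr rfl
  intro i _
  ring

def NBGood (p : ℤ) (L : List ℕ) : Prop :=
  (∀ d ∈ L, (d : ℤ) < p) ∧ (∀ h : L ≠ [], L.getLast h ≠ 0)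

lemma nbgood_tail {p : ℤ} {d : ℕ} {T : List ℕ} (h : NBGood p (d :: T)) : NBGood p T := by
  obtain ⟨h1, h2⟩ := h
  refine ⟨fun x hx => h1 x (List.mem_cons_of_mem _ hx), fun hT => ?_⟩
  have := h2 (by simp)
  rwa [List.getLast_cons hT] at this

lemma nbval_eq_zero {p : ℤ} (hp : 2 ≤ p) :
    ∀ L : List ℕ, NBGood p L → negBaseVal p L = 0 → L = [] := by
  intro L
  induction L with
  | nil => intro _ _; rfl
  | cons d T ih =>
    intro hg hv
    exfalso
    rw [negBaseVal_cons] at hv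
    have hd0 : (0:ℤ) ≤ (d:ℤ) := Int.natCast_nonneg d
    have hdp : (d:ℤ) < p := hg.1 d (by simp)
    have hpv : (d:ℤ) = p * negBaseVal p T := by linarith
    have hT0 : negBaseVal p T = 0 := by nlinarith [negBaseVal p T]
    have hd : (d:ℤ) = 0 := by rw [hpv, hT0, mul_zero]
    have hTnil : T = [] := ih (nbgood_tail hg) hT0
    subst hTnil
    have := hg.2 (by simp)
    simp at this
    omega

lemma nb_head_eq {p : ℤ} (hp : 2 ≤ p) {d : ℕ} (hd : (d:ℤ) < p) (v : ℤ) :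
    ((d:ℤ) + (-p) * v) % p = d := by
  have : (d:ℤ) + (-p) * v = d + p * (-v) := by ring
  rw [this, Int.add_mul_emod_self_left, Int.emod_eq_of_lt (Int.natCast_nonneg d) hd]

lemma nbval_inj {p : ℤ} (hp : 2 ≤ p) :
    ∀ L1 L2 : List ℕ, NBGood p L1 → NBGood p L2 →
      negBaseVal p L1 = negBaseVal p L2 → L1 = L2 := by
  intro L1
  induction L1 with
  | nil =>
    intro L2 _ hg2 hv
    exact (nbval_eq_zero hp L2 hg2 (by rw [← hv, negBaseVal_nil])).symm
  | cons d T ih =>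
    intro L2 hg1 hg2 hv
    cases L2 with
    | nil =>
      exact absurd (nbval_eq_zero hp (d :: T) hg1 (by rw [hv, negBaseVal_nil])) (by simp)
    | cons d' T' =>
      rw [negBaseVal_cons, negBaseVal_cons] at hv
      have hd : (d:ℤ) < p := hg1.1 d (by simp)
      have hd' : (d':ℤ) < p := hg2.1 d' (by simp)
      have e1 := nb_head_eq hp hd (negBaseVal p T)
      have e2 := nb_head_eq hp hd' (negBaseVal p T')
      rw [hv] at e1
      have hdd : d = d' := by omega
      subst hdd
      have hp0 : (p:ℤ) ≠ 0 := by omega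
      have hTT : negBaseVal p T = negBaseVal p T' := by
        have : (-p) * negBaseVal p T = (-p) * negBaseVal p T' := by linarith
        exact mul_left_cancel₀ (by omega : (-p:ℤ) ≠ 0) this
      rw [ih T' (nbgood_tail hg1) (nbgood_tail hg2) hTT]

lemma nb_exists {p : ℤ} (hp : 2 ≤ p) :
    ∀ n : ℕ, ∀ m : ℤ, 2 * m.natAbs + (if m < 0 then 1 else 0) ≤ n →
      ∃ L, NBGood p L ∧ m = negBaseVal p L := by
  intro n
  induction n with
  | zero =>
    intro m hm
    have : m = 0 := by omega
    exact ⟨[], ⟨by simp, by simp⟩, by simp [this, negBaseVal_nil]⟩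
  | succ n ih =>
    intro m hm
    by_cases hm0 : m = 0
    · exact ⟨[], ⟨by simp, by simp⟩, by simp [hm0, negBaseVal_nil]⟩
    · set d : ℤ := m % p with hd
      have hp0 : (0:ℤ) < p := by omega
      have hd0 : 0 ≤ d := Int.emod_nonneg m (by omega)
      have hdp : d < p := Int.emod_lt_of_pos m hp0
      have hdvd : p ∣ (d - m) := dvd_sub_comm.mp (Int.dvd_self_sub_of_emod_eq rfl)
      set m' : ℤ := (d - m) / p with hm'
      have hpm' : p * m' = d - m := Int.mul_ediv_cancel' hdvd
      have hmeas : 2 * m'.natAbs + (if m' < 0 then 1 else 0) ≤ n := by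
        rcases lt_or_gt_of_ne hm0 with hneg | hpos
        · -- m < 0 : 0 < m' and m' ≤ -m
          have h1 : 0 < m' := by nlinarith
          have h2 : m' ≤ -m := by nlinarith
          split_ifs at hm ⊢ <;> omega
        · -- m > 0 : m' ≤ 0 and -m' ≤ m - 1
          have h1 : m' ≤ 0 := by nlinarith
          have h2 : -m' ≤ m - 1 := by nlinarith
          split_ifs at hm ⊢ <;> omega
      obtain ⟨T, hTg, hTv⟩ := ih m' hmeas
      refine ⟨d.toNat :: T, ⟨?_, ?_⟩, ?_⟩
      · intro x hx
        rcases List.mem_cons.1 hx with h | h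
        · subst h; rwa [Int.toNat_of_nonneg hd0]
        · exact hTg.1 x h
      · intro hne
        cases T with
        | nil =>
          have hm'0 : m' = 0 := by rw [hTv, negBaseVal_nil]
          rw [hm'0, mul_zero] at hpm'
          simp only [List.getLast_singleton]
          omega
        | cons a b =>
          rw [List.getLast_cons (by simp)]
          exact hTg.2 (by simp)
      · rw [negBaseVal_cons, ← hTv, Int.toNat_of_nonneg hd0]
        linear_combination hpm'

/-- Every integer has a unique representation in base `-p` with digit set
`{0, 1, …, p-1}` and no leading zero digit (the empty list represents `0`). -/
theorem unique_negBase_representation (p : ℤ) (hp : 2 ≤ p) (m : ℤ) :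
    ∃! L : List ℕ,
      (∀ d ∈ L, (d : ℤ) < p) ∧
      (∀ h : L ≠ [], L.getLast h ≠ 0) ∧
      m = negBaseVal p L := by
  obtain ⟨L, hg, hv⟩ := nb_exists hp (2 * m.natAbs + (if m < 0 then 1 else 0)) m le_rfl
  refine ⟨L, ⟨hg.1, hg.2, hv⟩, ?_⟩
  rintro L' ⟨h1, h2, h3⟩
  exact nbval_inj hp L' L ⟨h1, h2⟩ hg (by rw [← h3, ← hv])
end

section
/- Let r ≥ 0 and let 𝒞 = {s(1,0) + t(−r,1) : s,t ≥ 0} ⊆ ℤ×ℤ. For any prime p, any 0 ≤ i,j ≤ p−1 and any 0 ≤ s ≤ r, the set {((m−i)/p, (n−j)/p) : (m,n) ∈ 𝒞 − (s,0), m ≡ i mod p, n ≡ j mod p} equals 𝒞 − (t,0) where t = ⌊(i + s + rj)/p⌋, and moreover 0 ≤ t ≤ r. -/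
/-- Let `𝒞` be the cone generated by `(1,0)` and `(-r,1)`, i.e. the lattice points `(m,n)`
with `n ≥ 0` and `-m - r·n ≤ 0`.  For a prime `p`, digits `0 ≤ i, j ≤ p-1` and `0 ≤ s ≤ r`,
the image of the translate `𝒞 - (s,0)` under the Cartier index map
`(m,n) ↦ ((m-i)/p, (n-j)/p)` (restricted to `m ≡ i`, `n ≡ j (mod p)`)
is `𝒞 - (t,0)` with `t = ⌊(i+s+rj)/p⌋`, and `0 ≤ t ≤ r`. -/
theorem cartier_image_of_cone (p : ℕ) (hp : p.Prime) (r s i j : ℤ)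
    (hr : 0 ≤ r) (hi0 : 0 ≤ i) (hi1 : i ≤ (p : ℤ) - 1)
    (hj0 : 0 ≤ j) (hj1 : j ≤ (p : ℤ) - 1) (hs0 : 0 ≤ s) (hs1 : s ≤ r) :
    ({w : ℤ × ℤ | ∃ m n : ℤ, 0 ≤ n ∧ -m - r * n ≤ s ∧
        m % (p : ℤ) = i ∧ n % (p : ℤ) = j ∧ w = ((m - i) / (p : ℤ), (n - j) / (p : ℤ))}
      = {w : ℤ × ℤ | 0 ≤ w.2 ∧ -w.1 - r * w.2 ≤ (i + s + r * j) / (p : ℤ)})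
    ∧ 0 ≤ (i + s + r * j) / (p : ℤ) ∧ (i + s + r * j) / (p : ℤ) ≤ r := by
  have hp0 : (0 : ℤ) < (p : ℤ) := by exact_mod_cast hp.pos
  refine ⟨?_, ?_, ?_⟩
  · ext w
    simp only [Set.mem_setOf_eq]
    constructor
    · rintro ⟨m, n, hn, hms, hmi, hnj, rfl⟩
      obtain ⟨a, ha⟩ : (p : ℤ) ∣ m - i := Int.dvd_self_sub_of_emod_eq hmi
      obtain ⟨b, hb⟩ : (p : ℤ) ∣ n - j := Int.dvd_self_sub_of_emod_eq hnj
      have hma : m = i + p * a := by linarith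
      have hnb : n = j + p * b := by linarith
      have hda : (m - i) / (p : ℤ) = a := by rw [ha]; exact Int.mul_ediv_cancel_left a hp0.ne'
      have hdb : (n - j) / (p : ℤ) = b := by rw [hb]; exact Int.mul_ediv_cancel_left b hp0.ne'
      simp only [hda, hdb]
      constructor
      · -- 0 ≤ b
        by_contra hbneg
        push_neg at hbneg
        have : (p : ℤ) * b ≤ -p := by
          have : b ≤ -1 := by omega
          nlinarith
        omega
      · rw [Int.le_ediv_iff_mul_le hp0]
        nlinarith
    · rintro ⟨h1, h2⟩
      refine ⟨i + p * w.1, j + p * w.2, ?_, ?_, ?_, ?_, ?_⟩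
      · nlinarith
      · have := Int.ediv_mul_le (i + s + r * j) hp0.ne'
        nlinarith [this, Int.ediv_mul_le (i + s + r * j) hp0.ne']
      · rw [Int.add_mul_emod_self_left]; exact Int.emod_eq_of_lt hi0 (by omega)
      · rw [Int.add_mul_emod_self_left]; exact Int.emod_eq_of_lt hj0 (by omega)
      · have : ∀ x : ℤ, (i + p * x - i) / (p : ℤ) = x := fun x => by
          simp [Int.mul_ediv_cancel_left _ hp0.ne']
        have h4 : (j + p * w.2 - j) / (p : ℤ) = w.2 := by
          simp [Int.mul_ediv_cancel_left _ hp0.ne']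
        rw [this, h4]
  · exact Int.ediv_nonneg (by nlinarith) hp0.le
  · have : (i + s + r * j) / (p : ℤ) < r + 1 := by
      rw [Int.ediv_lt_iff_lt_mul hp0]
      nlinarith
    omega
end

section
/- A bi-infinite sequence (u_m)_{m ∈ ℤ} over a finite alphabet is (−p)-automatic if and only if both one-sided sequences (u_m)_{m ≥ 0} and (u_{−m})_{m ≥ 0} are p-automatic. -/
/-!
A sequence is automatic in base `b` iff its kernel `{x ↦ u (ofDigits b L + b ^ |L| * x)}` is
finite. Since `(-p) ^ k = ± p ^ k`, and the `k`-digit base-`(-p)` numbers form a system of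
residues mod `p ^ k` of absolute value `< p ^ k`, every element of the `(-p)`-kernel of `u`
restricted to positive (or negative) arguments is, up to a shift by at most one, an element of
the `p`-kernel of one of the two halves of `u`, and conversely.
-/

/-- `u : ℕ → A` is `p`-automatic: some DFAO, reading the standard base-`p` representation
of `n` (digits `< p`, least significant digit first, no leading zero) outputs `u n`. -/
def IsPAutomatic {A : Type*} (p : ℕ) (u : ℕ → A) : Prop :=
  ∃ (S : Type) (_ : Fintype S) (δ : S → ℕ → S) (s0 : S) (ω : S → A),
    ∀ (n : ℕ) (L : List ℕ), (∀ d ∈ L, d < p) → (∀ h : L ≠ [], L.getLast h ≠ 0) →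
      (n : ℤ) = ∑ i ∈ Finset.range L.length, (L.getD i 0 : ℤ) * (p : ℤ) ^ i →
      ω (L.foldl δ s0) = u n

/-- `u : ℤ → A` is `(-p)`-automatic: some DFAO, reading the standard base-`(-p)`
representation of `m` (digits `< p`, least significant digit first, no leading zero)
outputs `u m`. -/
def IsNegPAutomatic {A : Type*} (p : ℕ) (u : ℤ → A) : Prop :=
  ∃ (S : Type) (_ : Fintype S) (δ : S → ℕ → S) (s0 : S) (ω : S → A),
    ∀ (m : ℤ) (L : List ℕ), (∀ d ∈ L, d < p) → (∀ h : L ≠ [], L.getLast h ≠ 0) →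
      m = ∑ i ∈ Finset.range L.length, (L.getD i 0 : ℤ) * (-(p : ℤ)) ^ i →
      ω (L.foldl δ s0) = u m

/-- Digits are least significant first, so `L.getLast` is the leading digit. -/
def IsCanonicalDigits (p : ℕ) (L : List ℕ) : Prop :=
  (∀ d ∈ L, d < p) ∧ ∀ h : L ≠ [], L.getLast h ≠ 0

namespace IsCanonicalDigits

variable {p : ℕ} {L L' : List ℕ}

lemma nil : IsCanonicalDigits p [] :=
  ⟨by simp, by simp⟩

lemma append (hL : ∀ d ∈ L, d < p) (hL' : IsCanonicalDigits p L') (hne : L' ≠ []) :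
    IsCanonicalDigits p (L ++ L') :=
  ⟨fun d hd => (List.mem_append.1 hd).elim (hL d) (hL'.1 d),
    fun h => by rw [List.getLast_append_of_ne_nil h hne]; exact hL'.2 hne⟩

lemma cons {d : ℕ} (hd : d < p) (hL : IsCanonicalDigits p L) (hnil : L = [] → d ≠ 0) :
    IsCanonicalDigits p (d :: L) := by
  by_cases h : L = []
  · subst h
    exact ⟨by simpa using hd, fun _ => hnil rfl⟩
  · simpa using hL.append (L := [d]) (by simpa using hd) h

end IsCanonicalDigits

section Digits

variable {R : Type*} [CommSemiring R]

lemma ofDigits_append' (b : R) (L₁ L₂ : List ℕ) :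
    Nat.ofDigits b (L₁ ++ L₂) = Nat.ofDigits b L₁ + b ^ L₁.length * Nat.ofDigits b L₂ := by
  induction L₁ with
  | nil => simp [Nat.ofDigits]
  | cons d L ih =>
    rw [List.cons_append, Nat.ofDigits, Nat.ofDigits, ih, List.length_cons, pow_succ']
    ring

lemma ofDigits_append_add_pow_mul (b : R) (L₁ L₂ : List ℕ) (x : R) :
    Nat.ofDigits b L₁ + b ^ L₁.length * (Nat.ofDigits b L₂ + b ^ L₂.length * x) =
      Nat.ofDigits b (L₁ ++ L₂) + b ^ (L₁ ++ L₂).length * x := by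
  rw [ofDigits_append', List.length_append, pow_add]
  ring

lemma sum_getD_mul_pow_eq_ofDigits (b : R) (L : List ℕ) :
    ∑ i ∈ Finset.range L.length, (L.getD i 0 : R) * b ^ i = Nat.ofDigits b L := by
  induction L with
  | nil => simp [Nat.ofDigits]
  | cons d L ih =>
    rw [List.length_cons, Finset.sum_range_succ', Nat.ofDigits, ← ih, Finset.mul_sum]
    simp only [List.getD_cons_succ, List.getD_cons_zero, pow_succ, pow_zero, mul_one]
    rw [add_comm]
    congr 1
    exact Finset.sum_congr rfl fun i _ => by ring

end Digits

section Kernel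

variable {R A : Type*} [CommSemiring R] {b : R} {p : ℕ} {u : R → A}

variable (b p u) in
def IsAutomaticInBase : Prop :=
  ∃ (S : Type) (_ : Fintype S) (δ : S → ℕ → S) (s0 : S) (ω : S → A),
    ∀ L : List ℕ, IsCanonicalDigits p L → ω (L.foldl δ s0) = u (Nat.ofDigits b L)

variable (b p u) in
def baseKernel : Set (R → A) :=
  {g | ∃ L : List ℕ, (∀ d ∈ L, d < p) ∧ g = fun x => u (Nat.ofDigits b L + b ^ L.length * x)}

lemma IsAutomaticInBase.of_fintype {S : Type*} [Fintype S] (δ : S → ℕ → S) (s0 : S)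
    (ω : S → A) (h : ∀ L, IsCanonicalDigits p L → ω (L.foldl δ s0) = u (Nat.ofDigits b L)) :
    IsAutomaticInBase b p u := by
  let e := Fintype.equivFin S
  refine ⟨Fin (Fintype.card S), inferInstance, fun s d => e (δ (e.symm s) d), e s0,
    ω ∘ e.symm, fun L hL => ?_⟩
  rw [List.foldl_hom e (g₁ := δ) fun s d => by simp, Function.comp_apply, e.symm_apply_apply]
  exact h L hL

lemma self_mem_baseKernel : u ∈ baseKernel b p u :=
  ⟨[], by simp, by simp [Nat.ofDigits]⟩

lemma comp_mem_baseKernel {g : R → A} (hg : g ∈ baseKernel b p u) {L : List ℕ}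
    (hL : ∀ d ∈ L, d < p) :
    (fun x => g (Nat.ofDigits b L + b ^ L.length * x)) ∈ baseKernel b p u := by
  obtain ⟨L₀, hL₀, rfl⟩ := hg
  exact ⟨L₀ ++ L, fun d hd => (List.mem_append.1 hd).elim (hL₀ d) (hL d),
    by simp only [ofDigits_append_add_pow_mul]⟩

/-- The kernel itself is a DFAO for `u`, with transitions `g ↦ (x ↦ g (d + b * x))`. -/
theorem isAutomaticInBase_of_finite_baseKernel (h : (baseKernel b p u).Finite) :
    IsAutomaticInBase b p u := by
  classical
  have := h.fintype
  let δ : baseKernel b p u → ℕ → baseKernel b p u := fun g d =>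
    if hd : d < p then ⟨_, comp_mem_baseKernel g.2 (L := [d]) (by simpa using hd)⟩ else g
  have foldl_δ : ∀ L : List ℕ, (∀ d ∈ L, d < p) → ∀ g : baseKernel b p u,
      (L.foldl δ g).1 = fun x => g.1 (Nat.ofDigits b L + b ^ L.length * x) := by
    intro L hL
    induction L with
    | nil => simp [Nat.ofDigits]
    | cons d L ih =>
      intro g
      have hd : d < p := hL d List.mem_cons_self
      rw [List.foldl_cons, ih (fun e he => hL e (List.mem_cons_of_mem d he))]
      simp only [δ, dif_pos hd, ofDigits_append_add_pow_mul, List.singleton_append]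
  refine IsAutomaticInBase.of_fintype δ ⟨u, self_mem_baseKernel⟩ (fun g => g.1 0) fun L hL => ?_
  simp [foldl_δ L hL.1]

theorem finite_baseKernel_of_isAutomaticInBase
    (hrep : ∀ x : R, ∃ L, IsCanonicalDigits p L ∧ Nat.ofDigits b L = x)
    (h : IsAutomaticInBase b p u) : (baseKernel b p u).Finite := by
  classical
  obtain ⟨S, _, δ, s0, ω, hω⟩ := h
  choose rep rep_canonical ofDigits_rep using hrep
  -- A kernel element is determined by the state reached on its digit prefix, except at `0`,
  -- where the prefix may end in zeros and the value is read off canonical digits instead.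
  refine (Set.finite_range fun q : S × S => fun x =>
    if x = 0 then ω q.2 else ω ((rep x).foldl δ q.1)).subset ?_
  rintro g ⟨L, hL, rfl⟩
  refine ⟨(L.foldl δ s0, (rep (Nat.ofDigits b L)).foldl δ s0), funext fun x => ?_⟩
  by_cases hx : x = 0
  · simp [hx, hω _ (rep_canonical _), ofDigits_rep]
  · have hne : rep x ≠ [] := fun h => hx (by simpa [h, Nat.ofDigits] using (ofDigits_rep x).symm)
    simp only [if_neg hx]
    rw [← List.foldl_append, hω _ ((rep_canonical x).append hL hne), ofDigits_append',
      ofDigits_rep]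

theorem isAutomaticInBase_iff_finite_baseKernel
    (hrep : ∀ x : R, ∃ L, IsCanonicalDigits p L ∧ Nat.ofDigits b L = x) :
    IsAutomaticInBase b p u ↔ (baseKernel b p u).Finite :=
  ⟨finite_baseKernel_of_isAutomaticInBase hrep, isAutomaticInBase_of_finite_baseKernel⟩

end Kernel

section Representations

variable {A : Type*} {p : ℕ}

lemma exists_isCanonicalDigits_ofDigits_eq (hp : 1 < p) (n : ℕ) :
    ∃ L, IsCanonicalDigits p L ∧ Nat.ofDigits p L = n :=
  ⟨p.digits n, ⟨fun _ => Nat.digits_lt_base hp,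
    fun h => Nat.getLast_digit_ne_zero p (Nat.digits_ne_nil_iff_ne_zero.1 h)⟩,
    Nat.ofDigits_digits p n⟩

theorem exists_isCanonicalDigits_negBase_ofDigits_eq (hp : 2 ≤ p) (m : ℤ) :
    ∃ L, IsCanonicalDigits p L ∧ Nat.ofDigits (-(p : ℤ)) L = m := by
  by_cases hm : m = 0
  · exact ⟨[], .nil, by simp [hm, Nat.ofDigits]⟩
  have hp0 : (0 : ℤ) < p := by omega
  have hdiv := Int.emod_add_mul_ediv m p
  have hmod_nonneg := Int.emod_nonneg m hp0.ne'
  have hmod_lt := Int.emod_lt_of_pos m hp0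
  obtain ⟨L, hL, hLq⟩ := exists_isCanonicalDigits_negBase_ofDigits_eq hp (-(m / p))
  refine ⟨(m % p).toNat :: L, hL.cons (by omega) fun hnil => ?_, ?_⟩
  · have hq : m / p = 0 := by simpa [hnil, Nat.ofDigits] using hLq.symm
    rw [hq, mul_zero, add_zero] at hdiv
    omega
  · rw [Nat.ofDigits, hLq, Int.toNat_of_nonneg hmod_nonneg]
    linear_combination hdiv
-- `m.natAbs` alone need not decrease: the step from `-1` is to `1`.
termination_by 2 * m.natAbs + if m < 0 then 1 else 0
decreasing_by
  have hpos : 0 < m / p → 2 * (m / p) ≤ p * (m / p) := fun h => by nlinarith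
  have hneg : m / p < 0 → p * (m / p) ≤ m / p - p + 1 := fun h => by nlinarith
  generalize m / p = q at *
  generalize (p : ℤ) * q = t at *
  split_ifs <;> omega

lemma isPAutomatic_iff_isAutomaticInBase {v : ℕ → A} :
    IsPAutomatic p v ↔ IsAutomaticInBase p p v := by
  constructor
  · rintro ⟨S, hS, δ, s0, ω, h⟩
    exact ⟨S, hS, δ, s0, ω, fun L hL => h _ L hL.1 hL.2
      (by rw [sum_getD_mul_pow_eq_ofDigits, Nat.coe_ofDigits])⟩
  · rintro ⟨S, hS, δ, s0, ω, h⟩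
    refine ⟨S, hS, δ, s0, ω, fun n L h₁ h₂ hn => ?_⟩
    rw [sum_getD_mul_pow_eq_ofDigits, ← Nat.coe_ofDigits, Nat.cast_inj] at hn
    rw [hn]
    exact h L ⟨h₁, h₂⟩

lemma isNegPAutomatic_iff_isAutomaticInBase {u : ℤ → A} :
    IsNegPAutomatic p u ↔ IsAutomaticInBase (-(p : ℤ)) p u := by
  constructor
  · rintro ⟨S, hS, δ, s0, ω, h⟩
    exact ⟨S, hS, δ, s0, ω, fun L hL => h _ L hL.1 hL.2 (sum_getD_mul_pow_eq_ofDigits _ L).symm⟩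
  · rintro ⟨S, hS, δ, s0, ω, h⟩
    refine ⟨S, hS, δ, s0, ω, fun m L h₁ h₂ hm => ?_⟩
    rw [hm, sum_getD_mul_pow_eq_ofDigits]
    exact h L ⟨h₁, h₂⟩

end Representations

section TwoSided

variable {A : Type*} {p : ℕ}

lemma exists_ofDigits_dvd_sub {b : ℤ} (hb : b ≠ 0) (k : ℕ) (x : ℤ) :
    ∃ L : List ℕ, L.length = k ∧ (∀ d ∈ L, d < b.natAbs) ∧ b ^ k ∣ Nat.ofDigits b L - x := by
  induction k generalizing x with
  | zero => exact ⟨[], rfl, by simp, by simp⟩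
  | succ k ih =>
    obtain ⟨L, hlen, hL, c, hc⟩ := ih (x / b)
    have hmod_nonneg := Int.emod_nonneg x hb
    have hmod_lt := Int.emod_lt x hb
    refine ⟨(x % b).toNat :: L, by simp [hlen], ?_, c, ?_⟩
    · intro d hd
      rcases List.mem_cons.1 hd with rfl | hd
      · omega
      · exact hL d hd
    · rw [Nat.ofDigits, Int.toNat_of_nonneg hmod_nonneg, pow_succ]
      linear_combination b * hc + Int.emod_add_mul_ediv x b

lemma abs_ofDigits_lt {b : ℤ} {L : List ℕ} (hL : ∀ d ∈ L, d < b.natAbs) :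
    |Nat.ofDigits b L| < |b| ^ L.length := by
  induction L with
  | nil => simp [Nat.ofDigits]
  | cons d L ih =>
    have hd : (d : ℤ) + 1 ≤ |b| := by
      have := hL d List.mem_cons_self
      rw [← Int.natCast_natAbs]
      omega
    have ih : |Nat.ofDigits b L| + 1 ≤ |b| ^ L.length :=
      ih fun e he => hL e (List.mem_cons_of_mem d he)
    rw [Nat.ofDigits, List.length_cons, pow_succ']
    calc |(d : ℤ) + b * Nat.ofDigits b L| ≤ d + |b| * |Nat.ofDigits b L| := by
          simpa [abs_mul] using abs_add_le (d : ℤ) (b * Nat.ofDigits b L)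
      _ < |b| * |b| ^ L.length := by
          nlinarith [mul_le_mul_of_nonneg_left ih (abs_nonneg b)]

lemma mem_baseKernel_of_lt (hp : 1 < p) (v : ℕ → A) {k r : ℕ} (hr : r < p ^ k) :
    (fun n => v (r + p ^ k * n)) ∈ baseKernel p p v := by
  refine ⟨p.digits r ++ List.replicate (k - (p.digits r).length) 0, fun d hd => ?_, ?_⟩
  · rcases List.mem_append.1 hd with hd | hd
    · exact Nat.digits_lt_base hp hd
    · rw [List.eq_of_mem_replicate hd]
      omega
  · have := (Nat.digits_length_le_iff hp r).2 hr
    simp [Nat.ofDigits_digits, Nat.add_sub_cancel' this]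

theorem finite_baseKernel_comp_mul_of_finite (hp : 0 < p) {u : ℤ → A}
    (hu : (baseKernel (-(p : ℤ)) p u).Finite) {s : ℤ} (hs : |s| = 1) :
    (baseKernel p p fun n : ℕ => u (s * n)).Finite := by
  -- every element is `n ↦ h (a * n + c)` with `h` in the `(-p)`-kernel and `|a| = 1`, `|c| ≤ 1`
  refine ((hu.prod ((Set.finite_Icc (-1 : ℤ) 1).prod (Set.finite_Icc (-1 : ℤ) 1))).image
    fun q (n : ℕ) => q.1 (q.2.1 * n + q.2.2)).subset ?_
  rintro _ ⟨L, hL, rfl⟩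
  set k := L.length
  set r : ℤ := Nat.ofDigits (p : ℤ) L with hr_def
  have hP : (0 : ℤ) < p ^ k := by positivity
  have hr : 0 ≤ r ∧ r < p ^ k := by
    refine ⟨by rw [hr_def, ← Nat.coe_ofDigits]; positivity, lt_of_abs_lt ?_⟩
    simpa using abs_ofDigits_lt (b := (p : ℤ)) (L := L) (by simpa using hL)
  obtain ⟨L', hlen, hL', t, ht⟩ :=
    exists_ofDigits_dvd_sub (b := -(p : ℤ)) (by simpa using hp.ne') k (s * r)
  have ht_lt : |t| < 2 := by
    have hr' : |Nat.ofDigits (-(p : ℤ)) L'| < p ^ k := by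
      simpa [hlen] using abs_ofDigits_lt hL'
    have hsr : |s * r| < p ^ k := by rw [abs_mul, hs, one_mul, abs_of_nonneg hr.1]; exact hr.2
    have : (p : ℤ) ^ k * |t| < p ^ k * 2 := by
      rw [show (p : ℤ) ^ k * |t| = |(-(p : ℤ)) ^ k * t| by simp [abs_mul], ← ht]
      linarith [abs_sub (Nat.ofDigits (-(p : ℤ)) L') (s * r)]
    exact lt_of_mul_lt_mul_left this hP.le
  have hsk : |s * (-1) ^ k| = 1 := by simp [abs_mul, hs]
  have hpow : (-(p : ℤ)) ^ k * (-1) ^ k = p ^ k := by rw [← mul_pow, neg_mul_neg, mul_one]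
  refine ⟨(_, s * (-1) ^ k, -t), ⟨⟨L', by simpa using hL', rfl⟩, abs_le.1 hsk.le, ?_⟩,
    funext fun n => ?_⟩
  · show -t ∈ Set.Icc (-1) 1
    have := abs_lt.1 ht_lt
    constructor <;> omega
  · simp only [hlen]
    congr 1
    push_cast
    linear_combination ht + s * n * hpow

lemma exists_add_eq_add_mul {P x : ℤ} (hx : |x| < P) :
    ∃ ρ c : ℕ, c ≤ 1 ∧ (ρ : ℤ) < P ∧ x + P = ρ + P * c := by
  obtain ⟨hx₁, hx₂⟩ := abs_lt.1 hx
  by_cases h : 0 ≤ x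
  · exact ⟨x.toNat, 1, le_rfl, by omega, by simp [Int.toNat_of_nonneg h]⟩
  · exact ⟨(x + P).toNat, 0, zero_le_one, by omega,
      by simp [Int.toNat_of_nonneg (by omega : 0 ≤ x + P)]⟩

lemma funext_of_zero_of_succ {f g : ℤ → A} (h0 : f 0 = g 0)
    (hpos : ∀ n : ℕ, f (n + 1) = g (n + 1)) (hneg : ∀ n : ℕ, f (-(n + 1)) = g (-(n + 1))) :
    f = g := by
  funext m
  rcases m with (_ | n) | n
  · exact h0
  · exact_mod_cast hpos n
  · rw [Int.negSucc_eq]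
    exact hneg n

theorem finite_baseKernel_negBase_of_finite [Finite A] (hp : 1 < p) {u : ℤ → A}
    (hpos : (baseKernel p p fun n : ℕ => u n).Finite)
    (hneg : (baseKernel p p fun n : ℕ => u (-n)).Finite) :
    (baseKernel (-(p : ℤ)) p u).Finite := by
  set K := (baseKernel p p fun n : ℕ => u n) ∪ baseKernel p p fun n : ℕ => u (-n)
  have hK : ∀ σ : ℤ, |σ| = 1 → (baseKernel p p fun n : ℕ => u (σ * n)) ⊆ K := by
    intro σ hσ
    rcases (abs_eq zero_le_one).1 hσ with rfl | rfl
    · simp only [one_mul]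
      exact Set.subset_union_left
    · simp only [neg_one_mul]
      exact Set.subset_union_right
  set T : Set (ℕ → A) := (fun q : (ℕ → A) × ℕ => fun n => q.1 (n + q.2)) '' (K ×ˢ Set.Iic 1)
  have hT : T.Finite := ((hpos.union hneg).prod (Set.finite_Iic 1)).image _
  -- `h (s * (n + 1)) = u (σ * (σ * r + p ^ k * (n + 1)))` with `σ = s * (-1) ^ k`; reducing
  -- `σ * r + p ^ k` to a residue mod `p ^ k` lands in the `p`-kernel of `n ↦ u (σ * n)`.
  have key : ∀ h ∈ baseKernel (-(p : ℤ)) p u, ∀ s : ℤ, |s| = 1 →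
      (fun n : ℕ => h (s * (n + 1))) ∈ T := by
    rintro _ ⟨L, hL, rfl⟩ s hs
    set k := L.length
    set r := Nat.ofDigits (-(p : ℤ)) L
    set σ := s * (-1) ^ k
    have hσ : |σ| = 1 := by simp [σ, abs_mul, hs]
    have hσσ : σ * σ = 1 := by rw [← abs_mul_abs_self, hσ, mul_one]
    have hpow : σ * p ^ k = s * (-(p : ℤ)) ^ k := by
      simp only [σ]
      rw [neg_pow (p : ℤ)]
      ring
    have hr : |σ * r| < p ^ k := by
      simpa [abs_mul, hσ] using abs_ofDigits_lt (b := -(p : ℤ)) (L := L) (by simpa using hL)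
    obtain ⟨ρ, c, hc, hρ, hρc⟩ := exists_add_eq_add_mul hr
    refine ⟨(_, c), ⟨hK σ hσ (mem_baseKernel_of_lt hp _ (k := k) (by exact_mod_cast hρ)), hc⟩,
      funext fun n => ?_⟩
    simp only
    congr 1
    push_cast
    linear_combination (-σ) * hρc + r * hσσ + (n + 1) * hpow
  refine Set.Finite.of_finite_image (f := fun h : ℤ → A =>
    (h 0, fun n : ℕ => h (n + 1), fun n : ℕ => h (-(n + 1))))
    ((Set.finite_univ.prod (hT.prod hT)).subset ?_) ?_
  · rintro _ ⟨h, hh, rfl⟩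
    exact ⟨trivial, by simpa using key h hh 1 (by simp), by simpa using key h hh (-1) (by simp)⟩
  · intro h₁ _ h₂ _ heq
    simp only [Prod.mk.injEq] at heq
    exact funext_of_zero_of_succ heq.1 (congrFun heq.2.1) (congrFun heq.2.2)

end TwoSided

/-- A bi-infinite sequence over a finite alphabet is `(-p)`-automatic if and only if both
one-sided sequences `(u_m)_{m ≥ 0}` and `(u_{-m})_{m ≥ 0}` are `p`-automatic. -/
theorem negPAutomatic_iff_two_sided {A : Type*} [Fintype A] (p : ℕ) (hp : 2 ≤ p)
    (u : ℤ → A) :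
    IsNegPAutomatic p u ↔
      IsPAutomatic p (fun m : ℕ => u m) ∧ IsPAutomatic p (fun m : ℕ => u (-(m : ℤ))) := by
  have hrep := exists_isCanonicalDigits_ofDigits_eq (by omega : 1 < p)
  rw [isNegPAutomatic_iff_isAutomaticInBase, isPAutomatic_iff_isAutomaticInBase,
    isPAutomatic_iff_isAutomaticInBase,
    isAutomaticInBase_iff_finite_baseKernel (exists_isCanonicalDigits_negBase_ofDigits_eq hp),
    isAutomaticInBase_iff_finite_baseKernel hrep, isAutomaticInBase_iff_finite_baseKernel hrep]
  refine ⟨fun h => ⟨?_, ?_⟩, fun h => finite_baseKernel_negBase_of_finite (by omega) h.1 h.2⟩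
  · simpa using finite_baseKernel_comp_mul_of_finite (by omega) h (s := 1) (by simp)
  · simpa using finite_baseKernel_comp_mul_of_finite (by omega) h (s := -1) (by simp)
end

section
/- A sequence (U_{m,n})_{(m,n) ∈ ℤ×ℕ} over F_p has a finite [p,p]-kernel if and only if it is [−p,p]-automatic. In particular, the [−p,p]-kernel (the smallest set containing U closed under the operators (W_{m,n}) ↦ (W_{−pm+i, pn+j}) for 0 ≤ i,j ≤ p−1) is finite if and only if the [p,p]-kernel is finite, and each is at most four times the size of the other. -/
/-!
Reading a digit list `L` of length `e` through the operators gives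
`W(m, n) = U((-p)^e m + A, p^e n + B)`, where `(A, B)` is the value of `L` in bases `(-p, p)`;
here `|A| < p^e`, `B < p^e`, and every residue of `A` mod `p^e` and every `B < p^e` occurs.
Since `(-p)^e m + A = p^e ((-1)^e m + ⌊A / p^e⌋) + (A mod p^e)` with `⌊A / p^e⌋ ∈ {0, -1}`,
every element of either kernel is an element of the other one precomposed in `m` with one of
four affine maps, which gives the equivalence of finiteness and the factor `4`.

A finite `[-p,p]`-kernel is the state set of a DFAO: transitions are the operators and the
output is the value at `(0, 0)`. Conversely, the kernel element reached along `L` is determined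
by the state reached along `L` and its value at `(0, 0)`, since its value at `(m, n) ≠ (0, 0)` is
the output after reading `L` followed by the base-`(-p, p)` digits of `(m, n)`.
-/

/-- The `[p,p]`-kernel of `U : ℤ × ℕ → F_p`: all subsequences
`(U_{p^e m + i, p^e n + j})` for `e ≥ 0`, `0 ≤ i, j ≤ p^e - 1`. -/
def ppKernel (p : ℕ) (U : ℤ × ℕ → ZMod p) : Set (ℤ × ℕ → ZMod p) :=
  {W | ∃ e i j : ℕ, i < p ^ e ∧ j < p ^ e ∧
    W = fun mn => U ((p : ℤ) ^ e * mn.1 + (i : ℤ), p ^ e * mn.2 + j)}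

/-- The `[-p,p]`-Cartier operator `W ↦ (W_{-pm+i, pn+j})`. -/
def negOp (p : ℕ) (i j : ℕ) (W : ℤ × ℕ → ZMod p) : ℤ × ℕ → ZMod p :=
  fun mn => W (-(p : ℤ) * mn.1 + (i : ℤ), p * mn.2 + j)

/-- The `[-p,p]`-kernel of `U`: the smallest set containing `U` closed under the operators
`W ↦ (W_{-pm+i, pn+j})` for `0 ≤ i, j ≤ p-1`. -/
def negPKernel (p : ℕ) (U : ℤ × ℕ → ZMod p) : Set (ℤ × ℕ → ZMod p) :=
  {W | ∃ L : List (ℕ × ℕ), (∀ d ∈ L, d.1 < p ∧ d.2 < p) ∧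
    W = L.foldl (fun W d => negOp p d.1 d.2 W) U}

/-- `U : ℤ × ℕ → F_p` is `[-p,p]`-automatic: a DFAO computes `U (m,n)` from the pair of
digit strings given by the base-`(-p)` representation of `m` and the base-`p`
representation of `n`, padded to equal length (no common leading zero pair) and read
least significant digit first. -/
def IsNegPPAutomatic (p : ℕ) (U : ℤ × ℕ → ZMod p) : Prop :=
  ∃ (S : Type) (_ : Fintype S) (δ : S → ℕ × ℕ → S) (s0 : S) (ω : S → ZMod p),
    ∀ (m : ℤ) (n : ℕ) (L : List (ℕ × ℕ)),
      (∀ d ∈ L, d.1 < p ∧ d.2 < p) →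
      (∀ h : L ≠ [], (L.getLast h).1 ≠ 0 ∨ (L.getLast h).2 ≠ 0) →
      m = ∑ i ∈ Finset.range L.length, ((L.getD i (0, 0)).1 : ℤ) * (-(p : ℤ)) ^ i →
      (n : ℤ) = ∑ i ∈ Finset.range L.length, ((L.getD i (0, 0)).2 : ℤ) * (p : ℤ) ^ i →
      ω (L.foldl δ s0) = U (m, n)

open Set

namespace Nat

theorem ofDigits_append' {R : Type*} [CommSemiring R] (b : R) (l₁ l₂ : List ℕ) :
    ofDigits b (l₁ ++ l₂) = ofDigits b l₁ + b ^ l₁.length * ofDigits b l₂ := by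
  induction l₁ with
  | nil => simp [ofDigits]
  | cons d l ih =>
    simp only [List.cons_append, ofDigits, ih, List.length_cons]
    ring

theorem ofDigits_eq_sum_getD {R : Type*} [CommSemiring R] (b : R) (l : List ℕ) :
    ofDigits b l = ∑ i ∈ Finset.range l.length, (l.getD i 0 : R) * b ^ i := by
  induction l with
  | nil => simp [ofDigits]
  | cons d l ih =>
    rw [ofDigits, ih, List.length_cons, Finset.sum_range_succ', Finset.mul_sum]
    simp only [List.getD_cons_succ, List.getD_cons_zero, pow_zero, mul_one]
    rw [add_comm]
    congr 1
    exact Finset.sum_congr rfl fun i _ => by ring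

end Nat

namespace Int

theorem abs_ofDigits_lt {b : ℤ} {l : List ℕ} (hl : ∀ d ∈ l, d < b.natAbs) :
    |Nat.ofDigits b l| < |b| ^ l.length := by
  induction l with
  | nil => simp [Nat.ofDigits]
  | cons d l ih =>
    have hd : (d : ℤ) + 1 ≤ |b| := by
      have := hl d (by simp)
      have := natCast_natAbs b
      omega
    have hl' := ih fun x hx => hl x (by simp [hx])
    rw [Nat.ofDigits, List.length_cons, pow_succ']
    calc |(d : ℤ) + b * Nat.ofDigits b l| ≤ d + |b| * |Nat.ofDigits b l| := by
          simpa [abs_mul] using abs_add_le (d : ℤ) (b * Nat.ofDigits b l)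
      _ < |b| * |b| ^ l.length := by nlinarith [abs_nonneg b]

theorem exists_ofDigits_modEq {b : ℤ} (hb : b ≠ 0) (e : ℕ) (x : ℤ) :
    ∃ l : List ℕ, l.length = e ∧ (∀ d ∈ l, d < b.natAbs) ∧
      Nat.ofDigits b l ≡ x [ZMOD b ^ e] := by
  induction e generalizing x with
  | zero => exact ⟨[], rfl, by simp, by simp [Int.modEq_one]⟩
  | succ e ih =>
    obtain ⟨l, hlen, hl, hmod⟩ := ih (x / b)
    have hr : ((x % b).toNat : ℤ) = x % b := toNat_of_nonneg (emod_nonneg x hb)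
    refine ⟨(x % b).toNat :: l, by simp [hlen], ?_, ?_⟩
    · have := emod_lt_abs x hb
      have := natCast_natAbs b
      simp only [List.mem_cons, forall_eq_or_imp]
      exact ⟨by omega, hl⟩
    · rw [Nat.ofDigits, hr, pow_succ']
      calc x % b + b * Nat.ofDigits b l ≡ x % b + b * (x / b) [ZMOD b * b ^ e] :=
            (hmod.mul_left' (c := b)).add_left _
        _ = x := emod_add_mul_ediv x b

theorem ediv_eq_zero_or_neg_one_of_abs_lt {a b : ℤ} (h : |a| < b) : a / b = 0 ∨ a / b = -1 := by
  rcases le_or_gt 0 a with ha | ha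
  · exact .inl (ediv_eq_zero_of_lt ha (lt_of_abs_lt h))
  · right
    rw [ediv_eq_iff_of_pos (by linarith [abs_nonneg a])]
    constructor <;> linarith [neg_abs_le a]

-- `m ↦ -(m / p)` sends `-1` to `1`, so `|m|` alone does not decrease along the recursion.
theorem natAbs_three_mul_neg_ediv_sub_one_lt {p m : ℤ} (hp : 2 ≤ p) (hm : m ≠ 0) :
    (3 * -(m / p) - 1).natAbs < (3 * m - 1).natAbs := by
  have h := emod_add_mul_ediv m p
  have h₀ := emod_nonneg m (by omega : p ≠ 0)
  have h₁ := emod_lt_of_pos m (by omega : 0 < p)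
  rcases lt_or_gt_of_ne hm with hm | hm
  · have : m / p < 0 := by nlinarith
    have : m ≤ m / p := by nlinarith
    omega
  · have : 0 ≤ m / p := by nlinarith
    have : m / p < m := by nlinarith
    omega

end Int

theorem Set.finite_iff_and_ncard_le_of_subset_image2 {α β γ : Type*} {f : α → β → γ}
    {g : α → γ → β} {s : Set α} {t : Set β} {u : Set γ} (hs : s.Finite)
    (hut : u ⊆ image2 f s t) (htu : t ⊆ image2 g s u) :
    (u.Finite ↔ t.Finite) ∧ u.ncard ≤ s.ncard * t.ncard := by
  have hfin : u.Finite ↔ t.Finite :=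
    ⟨fun hu => (hs.image2 g hu).subset htu, fun ht => (hs.image2 f ht).subset hut⟩
  refine ⟨hfin, ?_⟩
  by_cases ht : t.Finite
  · calc u.ncard ≤ (image2 f s t).ncard := ncard_le_ncard hut (hs.image2 f ht)
      _ ≤ (s ×ˢ t).ncard := by
          rw [← image_uncurry_prod]
          exact ncard_image_le (hs.prod ht)
      _ = s.ncard * t.ncard := ncard_prod
  · simp [Infinite.ncard (mt hfin.1 ht)]

def IsDigitList (p : ℕ) (L : List (ℕ × ℕ)) : Prop :=
  ∀ d ∈ L, d.1 < p ∧ d.2 < p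

def HasNonzeroLastDigit (L : List (ℕ × ℕ)) : Prop :=
  ∀ h : L ≠ [], (L.getLast h).1 ≠ 0 ∨ (L.getLast h).2 ≠ 0

def negPPValue (p : ℕ) (L : List (ℕ × ℕ)) : ℤ × ℕ :=
  (Nat.ofDigits (-(p : ℤ)) (L.map Prod.fst), Nat.ofDigits p (L.map Prod.snd))

section

variable {p : ℕ}

theorem IsDigitList.append {L M : List (ℕ × ℕ)} (hL : IsDigitList p L) (hM : IsDigitList p M) :
    IsDigitList p (L ++ M) :=
  List.forall_mem_append.2 ⟨hL, hM⟩

theorem HasNonzeroLastDigit.append (L : List (ℕ × ℕ)) {M : List (ℕ × ℕ)} (hM : M ≠ [])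
    (h : HasNonzeroLastDigit M) : HasNonzeroLastDigit (L ++ M) := fun hLM => by
  rw [List.getLast_append_of_ne_nil hLM hM]
  exact h hM

theorem negPPValue_nil : negPPValue p [] = (0, 0) := rfl

theorem negPPValue_cons (d : ℕ × ℕ) (L : List (ℕ × ℕ)) :
    negPPValue p (d :: L) =
      (d.1 + -(p : ℤ) * (negPPValue p L).1, d.2 + p * (negPPValue p L).2) := rfl

theorem negPPValue_eq_iff (L : List (ℕ × ℕ)) (m : ℤ) (n : ℕ) :
    negPPValue p L = (m, n) ↔
      m = ∑ i ∈ Finset.range L.length, ((L.getD i (0, 0)).1 : ℤ) * (-(p : ℤ)) ^ i ∧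
      (n : ℤ) = ∑ i ∈ Finset.range L.length, ((L.getD i (0, 0)).2 : ℤ) * (p : ℤ) ^ i := by
  have h₁ : Nat.ofDigits (-(p : ℤ)) (L.map Prod.fst) =
      ∑ i ∈ Finset.range L.length, ((L.getD i (0, 0)).1 : ℤ) * (-(p : ℤ)) ^ i := by
    rw [Nat.ofDigits_eq_sum_getD, List.length_map]
    exact Finset.sum_congr rfl fun i _ => by rw [← List.getD_map L (0, 0) Prod.fst]
  have h₂ : Nat.ofDigits (p : ℤ) (L.map Prod.snd) =
      ∑ i ∈ Finset.range L.length, ((L.getD i (0, 0)).2 : ℤ) * (p : ℤ) ^ i := by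
    rw [Nat.ofDigits_eq_sum_getD, List.length_map]
    exact Finset.sum_congr rfl fun i _ => by rw [← List.getD_map L (0, 0) Prod.snd]
  rw [← h₁, ← h₂, ← Nat.coe_ofDigits, negPPValue, Prod.mk.injEq, Nat.cast_inj, eq_comm,
    @eq_comm ℕ]

theorem IsDigitList.abs_negPPValue_lt {L : List (ℕ × ℕ)} (hL : IsDigitList p L) :
    |(negPPValue p L).1| < (p : ℤ) ^ L.length ∧ (negPPValue p L).2 < p ^ L.length := by
  have h₁ := Int.abs_ofDigits_lt (b := -(p : ℤ)) (l := L.map Prod.fst) (by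
    simpa using fun a b h => (hL (a, b) h).1)
  have h₂ := Int.abs_ofDigits_lt (b := (p : ℤ)) (l := L.map Prod.snd) (by
    simpa using fun b a h => (hL (a, b) h).2)
  simp only [List.length_map, abs_neg, Nat.abs_cast, ← Nat.coe_ofDigits] at h₁ h₂
  exact ⟨h₁, by exact_mod_cast h₂⟩

theorem foldl_negOp_apply (L : List (ℕ × ℕ)) (W : ℤ × ℕ → ZMod p) (mn : ℤ × ℕ) :
    L.foldl (fun W d => negOp p d.1 d.2 W) W mn =
      W ((-(p : ℤ)) ^ L.length * mn.1 + (negPPValue p L).1,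
        p ^ L.length * mn.2 + (negPPValue p L).2) := by
  induction L generalizing W with
  | nil => simp [negPPValue_nil]
  | cons d L ih =>
    rw [List.foldl_cons, ih, negOp, negPPValue_cons, List.length_cons]
    congr 2 <;> ring

theorem foldl_negOp_apply_negPPValue (L M : List (ℕ × ℕ)) (W : ℤ × ℕ → ZMod p) :
    L.foldl (fun W d => negOp p d.1 d.2 W) W (negPPValue p M) = W (negPPValue p (L ++ M)) := by
  simp only [foldl_negOp_apply, negPPValue, List.map_append, Nat.ofDigits_append',
    List.length_map]
  congr 2 <;> ring

theorem negOp_mem_negPKernel {U W : ℤ × ℕ → ZMod p} (hW : W ∈ negPKernel p U) {i j : ℕ}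
    (hi : i < p) (hj : j < p) : negOp p i j W ∈ negPKernel p U := by
  obtain ⟨L, hL, rfl⟩ := hW
  exact ⟨L ++ [(i, j)], IsDigitList.append hL (by simp [IsDigitList, hi, hj]), by
    rw [List.foldl_append]; rfl⟩

theorem negPKernel_subset_image2_ppKernel (U : ℤ × ℕ → ZMod p) :
    negPKernel p U ⊆ image2 (fun (t : ℤ × ℤ) W mn => W (t.1 * mn.1 + t.2, mn.2))
      ({1, -1} ×ˢ {0, -1}) (ppKernel p U) := by
  rintro _ ⟨L, hL, rfl⟩
  obtain ⟨hA, hB⟩ := IsDigitList.abs_negPPValue_lt hL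
  set e := L.length
  set A := (negPPValue p L).1
  have hpe : (0 : ℤ) < (p : ℤ) ^ e := lt_of_le_of_lt (abs_nonneg A) hA
  have hi : ((A % (p : ℤ) ^ e).toNat : ℤ) = A % (p : ℤ) ^ e :=
    Int.toNat_of_nonneg (Int.emod_nonneg _ hpe.ne')
  refine ⟨((-1) ^ e, A / (p : ℤ) ^ e),
    ⟨neg_one_pow_eq_or ℤ e, Int.ediv_eq_zero_or_neg_one_of_abs_lt hA⟩, _,
    ⟨e, (A % (p : ℤ) ^ e).toNat, (negPPValue p L).2, ?_, hB, rfl⟩, funext fun mn => ?_⟩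
  · have := Int.emod_lt_of_pos A hpe
    exact_mod_cast hi ▸ this
  · dsimp only
    rw [foldl_negOp_apply, hi, neg_pow]
    congr 2
    linear_combination Int.emod_add_mul_ediv A ((p : ℤ) ^ e)

theorem exists_isDigitList_modEq (hp : 1 < p) (e : ℕ) (x : ℤ) {n : ℕ} (hn : n < p ^ e) :
    ∃ L, IsDigitList p L ∧ L.length = e ∧ (negPPValue p L).1 ≡ x [ZMOD (p : ℤ) ^ e] ∧
      (negPPValue p L).2 = n := by
  obtain ⟨a, ha_len, ha, hmod⟩ := Int.exists_ofDigits_modEq (b := -(p : ℤ)) (by omega) e x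
  have hb_len := Nat.length_digitsAppend hp e hn
  refine ⟨a.zip (Nat.digitsAppend p e n), fun d hd => ?_, by simp [ha_len, hb_len], ?_, ?_⟩
  · obtain ⟨h₁, h₂⟩ := List.of_mem_zip hd
    exact ⟨by simpa using ha _ h₁, Nat.lt_of_mem_digitsAppend hp e _ h₂⟩
  · rw [negPPValue, List.map_fst_zip (by omega)]
    rw [neg_pow] at hmod
    exact hmod.of_mul_left _
  · rw [negPPValue, List.map_snd_zip (by omega), Nat.digitsAppend,
      Nat.ofDigits_append_replicate_zero, Nat.ofDigits_digits]

theorem ppKernel_subset_image2_negPKernel (hp : 1 < p) (U : ℤ × ℕ → ZMod p) :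
    ppKernel p U ⊆ image2 (fun (t : ℤ × ℤ) W mn => W (t.1 * (mn.1 - t.2), mn.2))
      ({1, -1} ×ˢ {0, -1}) (negPKernel p U) := by
  rintro _ ⟨e, i, j, hi, hj, rfl⟩
  obtain ⟨L, hL, rfl, hmod, hB⟩ := exists_isDigitList_modEq hp e i hj
  obtain ⟨hA, -⟩ := hL.abs_negPPValue_lt
  set A := (negPPValue p L).1
  have hAi : A % (p : ℤ) ^ L.length = i :=
    hmod.eq.trans (Int.emod_eq_of_lt (by positivity) (by exact_mod_cast hi))
  have hsign : ((-1 : ℤ) ^ L.length) * (-1) ^ L.length = 1 := by rw [← mul_pow]; simp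
  refine ⟨((-1) ^ L.length, A / (p : ℤ) ^ L.length),
    ⟨neg_one_pow_eq_or ℤ _, Int.ediv_eq_zero_or_neg_one_of_abs_lt hA⟩, _, ⟨L, hL, rfl⟩,
    funext fun mn => ?_⟩
  dsimp only
  rw [foldl_negOp_apply, hB, ← hAi, neg_pow]
  congr 2
  linear_combination ((p : ℤ) ^ L.length * (mn.1 - A / (p : ℤ) ^ L.length)) * hsign -
    Int.emod_add_mul_ediv A ((p : ℤ) ^ L.length)

theorem exists_isDigitList_hasNonzeroLastDigit_negPPValue_eq (hp : 2 ≤ p) (mn : ℤ × ℕ) :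
    ∃ L, IsDigitList p L ∧ HasNonzeroLastDigit L ∧ negPPValue p L = mn := by
  obtain ⟨m, n⟩ := mn
  induction hk : (3 * m - 1).natAbs + n using Nat.strong_induction_on generalizing m n with
  | _ k ih =>
  by_cases h0 : m = 0 ∧ n = 0
  · obtain ⟨rfl, rfl⟩ := h0
    exact ⟨[], by simp [IsDigitList], by simp [HasNonzeroLastDigit], rfl⟩
  have hlt : (3 * -(m / p) - 1).natAbs + n / p < k := by
    by_cases hm : m = 0
    · have : n / p < n := Nat.div_lt_self (by omega) hp
      simp [hm] at hk ⊢
      omega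
    · have := Int.natAbs_three_mul_neg_ediv_sub_one_lt (p := p) (by exact_mod_cast hp) hm
      have := Nat.div_le_self n p
      omega
  obtain ⟨L, hL, hlast, hval⟩ := ih _ hlt (-(m / p)) (n / p) rfl
  have hr : ((m % p).toNat : ℤ) = m % p := Int.toNat_of_nonneg (Int.emod_nonneg m (by omega))
  refine ⟨((m % p).toNat, n % p) :: L, ?_, fun _ => ?_, ?_⟩
  · have := Int.emod_lt_of_pos m (by omega : (0 : ℤ) < p)
    simp only [IsDigitList, List.mem_cons, forall_eq_or_imp]
    exact ⟨⟨by omega, Nat.mod_lt n (by omega)⟩, hL⟩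
  · cases L with
    | nil =>
      simp only [negPPValue_nil, Prod.mk.injEq, zero_eq_neg] at hval
      have hm : m % p = m := by simpa [hval.1] using Int.emod_add_mul_ediv m p
      have hn : n % p = n := by simpa [← hval.2] using Nat.mod_add_div n p
      simp only [List.getLast_singleton, hm, hn]
      omega
    | cons d L =>
      rw [List.getLast_cons (List.cons_ne_nil d L)]
      exact hlast _
  · rw [negPPValue_cons, hval, hr, Prod.mk.injEq]
    exact ⟨by linear_combination Int.emod_add_mul_ediv m p, Nat.mod_add_div n p⟩

theorem isNegPPAutomatic_of_negPKernel_finite (hp : 0 < p) {U : ℤ × ℕ → ZMod p}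
    (h : (negPKernel p U).Finite) : IsNegPPAutomatic p U := by
  let δ : negPKernel p U → ℕ × ℕ → negPKernel p U := fun W d =>
    ⟨negOp p (d.1 % p) (d.2 % p) W, negOp_mem_negPKernel W.2 (d.1.mod_lt hp) (d.2.mod_lt hp)⟩
  have hδ : ∀ L, IsDigitList p L → ∀ W,
      (L.foldl δ W).1 = L.foldl (fun W d => negOp p d.1 d.2 W) W.1 := by
    intro L hL
    induction L with
    | nil => exact fun _ => rfl
    | cons d L ih =>
      intro W
      obtain ⟨⟨hd₁, hd₂⟩, hL⟩ := List.forall_mem_cons.1 hL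
      simp only [List.foldl_cons, ih hL, δ, Nat.mod_eq_of_lt hd₁, Nat.mod_eq_of_lt hd₂]
  refine ⟨negPKernel p U, h.fintype, δ, ⟨U, [], by simp, rfl⟩, fun W => W.1 (0, 0),
    fun m n L hL _ hm hn => ?_⟩
  show (L.foldl δ _).1 (0, 0) = U (m, n)
  rw [hδ L hL, foldl_negOp_apply, (negPPValue_eq_iff L m n).2 ⟨hm, hn⟩]
  simp

theorem negPKernel_finite_of_isNegPPAutomatic (hp : 2 ≤ p) {U : ℤ × ℕ → ZMod p}
    (h : IsNegPPAutomatic p U) : (negPKernel p U).Finite := by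
  obtain ⟨S, _, δ, s₀, ω, hω⟩ := h
  have : NeZero p := ⟨by omega⟩
  choose rep hrep_digits hrep_last hrep_val using exists_isDigitList_hasNonzeroLastDigit_negPPValue_eq hp
  -- The hypothesis on the automaton says nothing about `L` itself when `L` ends in zero digits,
  -- hence the value at `(0, 0)` is recorded next to the state.
  let Φ : S × ZMod p → ℤ × ℕ → ZMod p := fun sc mn =>
    if mn = (0, 0) then sc.2 else ω ((rep mn).foldl δ sc.1)
  refine (finite_range Φ).subset ?_
  rintro _ ⟨L, hL, rfl⟩
  refine ⟨(L.foldl δ s₀, L.foldl (fun W d => negOp p d.1 d.2 W) U (0, 0)), funext fun mn => ?_⟩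
  by_cases h0 : mn = (0, 0)
  · simp [Φ, h0]
  have hne : rep mn ≠ [] := fun h => h0 (by rw [← hrep_val mn, h, negPPValue_nil])
  obtain ⟨hm, hn⟩ := (negPPValue_eq_iff (L ++ rep mn) _ _).1 rfl
  simp only [Φ, if_neg h0]
  calc ω ((rep mn).foldl δ (L.foldl δ s₀))
      = U (negPPValue p (L ++ rep mn)) := by
        rw [← List.foldl_append]
        exact hω _ _ _ (IsDigitList.append hL (hrep_digits mn)) ((hrep_last mn).append L hne)
          hm hn
    _ = L.foldl (fun W d => negOp p d.1 d.2 W) U (negPPValue p (rep mn)) :=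
        (foldl_negOp_apply_negPPValue L (rep mn) U).symm
    _ = _ := by rw [hrep_val]

end

/-- A sequence `(U_{m,n})_{(m,n) ∈ ℤ×ℕ}` over `F_p` has a finite `[p,p]`-kernel if and only
if it is `[-p,p]`-automatic.  In particular, the `[-p,p]`-kernel is finite if and only if the
`[p,p]`-kernel is finite, and each is at most four times the size of the other. -/
theorem ppKernel_finite_iff_negPPAutomatic (p : ℕ) (hp : p.Prime) (U : ℤ × ℕ → ZMod p) :
    ((ppKernel p U).Finite ↔ IsNegPPAutomatic p U)
    ∧ ((negPKernel p U).Finite ↔ (ppKernel p U).Finite)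
    ∧ (negPKernel p U).ncard ≤ 4 * (ppKernel p U).ncard
    ∧ (ppKernel p U).ncard ≤ 4 * (negPKernel p U).ncard := by
  have hp₂ := hp.two_le
  have hT : ({1, -1} ×ˢ {0, -1} : Set (ℤ × ℤ)).ncard = 4 := by
    rw [ncard_prod, ncard_pair (by decide), ncard_pair (by decide)]
  have hT_fin : ({1, -1} ×ˢ {0, -1} : Set (ℤ × ℤ)).Finite := toFinite _
  obtain ⟨hfin, hneg⟩ := finite_iff_and_ncard_le_of_subset_image2 hT_fin
    (negPKernel_subset_image2_ppKernel U) (ppKernel_subset_image2_negPKernel hp.one_lt U)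
  obtain ⟨-, hpp⟩ := finite_iff_and_ncard_le_of_subset_image2 hT_fin
    (ppKernel_subset_image2_negPKernel hp.one_lt U) (negPKernel_subset_image2_ppKernel U)
  rw [hT] at hneg hpp
  exact ⟨⟨fun h => isNegPPAutomatic_of_negPKernel_finite hp.pos (hfin.2 h),
    fun h => hfin.1 (negPKernel_finite_of_isNegPPAutomatic hp₂ h)⟩, hfin, hneg, hpp⟩
end

section
/- If U ∈ F_p^{ℕ×ℕ} is [p,p]-automatic, then there is a constant K such that the number of distinct m×n rectangular subwords occurring in U is at most K·max{m,n}^2 for all m,n ≥ 1. -/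
/-!
Cut `ℕ × ℕ` into aligned blocks of side `P = p ^ k`, where `max m n ≤ P ≤ p * max m n`. An
`m × n` window meets at most `2 × 2` blocks. On a block `(A, B) ≠ (0, 0)` the automaton first
reads the `k` low digit pairs (the position inside the block) and then the digits of `(A, B)`,
so `U` on that block is determined by the map `t ↦ ω (δ* t (digits of (A, B)))` on states, one of
finitely many, say `N`. Hence a window is determined by its offset modulo `P` and by the four
block descriptions, which leaves at most `P² N⁴ ≤ p² N⁴ max(m, n)²` windows.
-/

/-- `U : ℕ × ℕ → F_p` is `[p,p]`-automatic: a DFAO computes `U (m,n)` from the base-`p`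
representations of `m` and `n`, padded to equal length (no common leading zero pair) and
read least significant digit first. -/
def IsPPAutomatic (p : ℕ) (U : ℕ × ℕ → ZMod p) : Prop :=
  ∃ (S : Type) (_ : Fintype S) (δ : S → ℕ × ℕ → S) (s0 : S) (ω : S → ZMod p),
    ∀ (m n : ℕ) (L : List (ℕ × ℕ)),
      (∀ d ∈ L, d.1 < p ∧ d.2 < p) →
      (∀ h : L ≠ [], (L.getLast h).1 ≠ 0 ∨ (L.getLast h).2 ≠ 0) →
      (m : ℤ) = ∑ i ∈ Finset.range L.length, ((L.getD i (0, 0)).1 : ℤ) * (p : ℤ) ^ i →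
      (n : ℤ) = ∑ i ∈ Finset.range L.length, ((L.getD i (0, 0)).2 : ℤ) * (p : ℤ) ^ i →
      ω (L.foldl δ s0) = U (m, n)

theorem Nat.ofDigits_map_eq_sum_getD {R α : Type*} [CommSemiring R] (p : ℕ) (g : α → ℕ)
    (d : α) (L : List α) :
    ((Nat.ofDigits p (L.map g) : ℕ) : R) =
      ∑ i ∈ Finset.range L.length, (g (L.getD i d) : R) * (p : R) ^ i := by
  induction L with
  | nil => simp
  | cons a L ih =>
    rw [List.length_cons, Finset.sum_range_succ', List.map_cons, Nat.ofDigits_cons,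
      Nat.cast_add, Nat.cast_mul, ih, Finset.mul_sum, add_comm]
    simp only [List.getD_cons_succ, List.getD_cons_zero, pow_zero, mul_one]
    exact congrArg (· + _) (Finset.sum_congr rfl fun i _ => by ring)

section Digits

variable {p : ℕ}

def lowDigitPairs (p : ℕ) : ℕ → ℕ → ℕ → List (ℕ × ℕ)
  | 0, _, _ => []
  | k + 1, x, y => (x % p, y % p) :: lowDigitPairs p k (x / p) (y / p)

theorem lowDigitPairs_mod_pow (k x y : ℕ) :
    lowDigitPairs p k (x % p ^ k) (y % p ^ k) = lowDigitPairs p k x y := by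
  induction k generalizing x y with
  | zero => rfl
  | succ k ih =>
    simp only [lowDigitPairs, pow_succ', Nat.mod_mul_right_mod, Nat.mod_mul_right_div_self, ih]

def digitPairs (p x y : ℕ) : List (ℕ × ℕ) :=
  if 1 < p ∧ (x ≠ 0 ∨ y ≠ 0) then (x % p, y % p) :: digitPairs p (x / p) (y / p) else []
termination_by x + y
decreasing_by
  obtain ⟨hp, hx | hy⟩ := ‹1 < p ∧ (x ≠ 0 ∨ y ≠ 0)›
  · have := Nat.div_lt_self (Nat.pos_of_ne_zero hx) hp
    have := Nat.div_le_self y p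
    omega
  · have := Nat.div_lt_self (Nat.pos_of_ne_zero hy) hp
    have := Nat.div_le_self x p
    omega

theorem digitPairs_eq_nil_iff (hp : 1 < p) {x y : ℕ} :
    digitPairs p x y = [] ↔ x = 0 ∧ y = 0 := by
  rw [digitPairs]
  split_ifs with h <;> simp only [false_iff, true_iff] <;> omega

theorem digitPairs_of_ne_zero (hp : 1 < p) {x y : ℕ} (h : x ≠ 0 ∨ y ≠ 0) :
    digitPairs p x y = (x % p, y % p) :: digitPairs p (x / p) (y / p) := by
  rw [digitPairs, if_pos ⟨hp, h⟩]

theorem lt_of_mem_digitPairs {x y : ℕ} : ∀ d ∈ digitPairs p x y, d.1 < p ∧ d.2 < p := by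
  induction x, y using digitPairs.induct p with
  | case1 x y h ih =>
    rw [digitPairs_of_ne_zero h.1 h.2]
    rintro d (_ | ⟨_, hd⟩)
    · exact ⟨Nat.mod_lt _ (by omega), Nat.mod_lt _ (by omega)⟩
    · exact ih d hd
  | case2 x y h => simp [digitPairs, h]

theorem getLast_digitPairs_ne_zero {x y : ℕ} (h : digitPairs p x y ≠ []) :
    (digitPairs p x y).getLast h ≠ (0, 0) := by
  induction x, y using digitPairs.induct p with
  | case1 x y hxy ih =>
    simp only [digitPairs_of_ne_zero hxy.1 hxy.2]
    by_cases htail : digitPairs p (x / p) (y / p) = []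
    · simp only [htail, List.getLast_singleton, ne_eq, Prod.mk.injEq]
      rw [digitPairs_eq_nil_iff hxy.1, Nat.div_eq_zero_iff_lt (by omega),
        Nat.div_eq_zero_iff_lt (by omega)] at htail
      rw [Nat.mod_eq_of_lt htail.1, Nat.mod_eq_of_lt htail.2]
      tauto
    · rw [List.getLast_cons htail]
      exact ih htail
  | case2 x y hxy => simp [digitPairs, hxy] at h

theorem ofDigits_digitPairs (hp : 1 < p) (x y : ℕ) :
    Nat.ofDigits p ((digitPairs p x y).map Prod.fst) = x ∧
      Nat.ofDigits p ((digitPairs p x y).map Prod.snd) = y := by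
  induction x, y using digitPairs.induct p with
  | case1 x y h ih =>
    simp only [digitPairs_of_ne_zero hp h.2, List.map_cons, Nat.ofDigits_cons, ih.1, ih.2,
      Nat.mod_add_div, and_self]
  | case2 x y h =>
    rw [digitPairs, if_neg h]
    simp only [List.map_nil, Nat.ofDigits_nil]
    omega

theorem digitPairs_eq_lowDigitPairs_append (hp : 1 < p) (k : ℕ) {x y : ℕ}
    (h : x / p ^ k ≠ 0 ∨ y / p ^ k ≠ 0) :
    digitPairs p x y = lowDigitPairs p k x y ++ digitPairs p (x / p ^ k) (y / p ^ k) := by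
  induction k generalizing x y with
  | zero => simp [lowDigitPairs]
  | succ k ih =>
    rw [pow_succ', ← Nat.div_div_eq_div_mul, ← Nat.div_div_eq_div_mul] at h ⊢
    have hxy : x ≠ 0 ∨ y ≠ 0 := by
      rcases h with h | h <;> [left; right] <;> rintro rfl <;> simp at h
    rw [digitPairs_of_ne_zero hp hxy, lowDigitPairs, List.cons_append, ih h]

end Digits

theorem Function.FactorsThrough.ncard_range_le {α β γ : Type*} [Finite γ] {W : α → β}
    {key : α → γ} (h : W.FactorsThrough key) : (Set.range W).ncard ≤ Nat.card γ := by
  rcases isEmpty_or_nonempty α with hα | ⟨⟨a⟩⟩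
  · simp [Set.range_eq_empty]
  calc (Set.range W).ncard ≤ (Set.range (Function.extend key W fun _ => W a)).ncard :=
        Set.ncard_le_ncard (by rintro _ ⟨x, rfl⟩; exact ⟨key x, h.extend_apply _ x⟩)
          (Set.finite_range _)
    _ ≤ Nat.card γ := Finite.card_range_le _

section Automaton

variable {p : ℕ} {S : Type} (δ : S → ℕ × ℕ → S) (s0 : S) (ω : S → ZMod p)

def DFAOComputes (U : ℕ × ℕ → ZMod p) : Prop :=
  ∀ (m n : ℕ) (L : List (ℕ × ℕ)),
    (∀ d ∈ L, d.1 < p ∧ d.2 < p) →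
    (∀ h : L ≠ [], (L.getLast h).1 ≠ 0 ∨ (L.getLast h).2 ≠ 0) →
    (m : ℤ) = ∑ i ∈ Finset.range L.length, ((L.getD i (0, 0)).1 : ℤ) * (p : ℤ) ^ i →
    (n : ℤ) = ∑ i ∈ Finset.range L.length, ((L.getD i (0, 0)).2 : ℤ) * (p : ℤ) ^ i →
    ω (L.foldl δ s0) = U (m, n)

/-- `none` marks the origin block: its points are read without the `k` padding digits, and the
automaton need not ignore leading zeros. -/
def blockDesc (A B : ℕ) : Option (S → ZMod p) :=
  if A = 0 ∧ B = 0 then none else some fun t => ω ((digitPairs p A B).foldl δ t)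

def blockEntry (U : ℕ × ℕ → ZMod p) (k r s : ℕ) : Option (S → ZMod p) → ZMod p
  | none => U (r, s)
  | some g => g ((lowDigitPairs p k r s).foldl δ s0)

def windowKey (k : ℕ) (ab : ℕ × ℕ) :
    ZMod (p ^ k) × ZMod (p ^ k) × (Fin 2 → Fin 2 → Option (S → ZMod p)) :=
  (ab.1, ab.2, fun c d => blockDesc δ ω (ab.1 / p ^ k + c) (ab.2 / p ^ k + d))

variable {δ s0 ω} {U : ℕ × ℕ → ZMod p}

theorem DFAOComputes.apply_eq_foldl_digitPairs (hU : DFAOComputes δ s0 ω U) (hp : 1 < p)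
    (x y : ℕ) : U (x, y) = ω ((digitPairs p x y).foldl δ s0) := by
  obtain ⟨hx, hy⟩ := ofDigits_digitPairs hp x y
  refine (hU x y _ lt_of_mem_digitPairs (fun h => ?_) ?_ ?_).symm
  · simpa [Prod.ext_iff, or_iff_not_imp_left] using getLast_digitPairs_ne_zero h
  · rw [← Nat.ofDigits_map_eq_sum_getD, hx]
  · rw [← Nat.ofDigits_map_eq_sum_getD, hy]

theorem DFAOComputes.apply_eq_blockEntry (hU : DFAOComputes δ s0 ω U) (hp : 1 < p)
    (k x y : ℕ) :
    U (x, y) = blockEntry δ s0 U k (x % p ^ k) (y % p ^ k)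
      (blockDesc δ ω (x / p ^ k) (y / p ^ k)) := by
  by_cases h : x / p ^ k = 0 ∧ y / p ^ k = 0
  · rw [blockDesc, if_pos h, blockEntry]
    simp only [Nat.div_eq_zero_iff_lt (by positivity : 0 < p ^ k)] at h
    rw [Nat.mod_eq_of_lt h.1, Nat.mod_eq_of_lt h.2]
  · rw [blockDesc, if_neg h, blockEntry, lowDigitPairs_mod_pow, ← List.foldl_append,
      ← digitPairs_eq_lowDigitPairs_append hp k (not_and_or.1 h),
      hU.apply_eq_foldl_digitPairs hp]

theorem DFAOComputes.window_factorsThrough (hU : DFAOComputes δ s0 ω U) (hp : 1 < p)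
    {k m n : ℕ} (hm : m ≤ p ^ k) (hn : n ≤ p ^ k) :
    (fun ab : ℕ × ℕ => fun ij : Fin m × Fin n => U (ab.1 + ij.1, ab.2 + ij.2)).FactorsThrough
      (windowKey δ ω k) := by
  have hP : 0 < p ^ k := by positivity
  have carry {a i : ℕ} (hi : i < p ^ k) :
      (a + i) / p ^ k = a / p ^ k + (a % p ^ k + i) / p ^ k ∧ (a % p ^ k + i) / p ^ k < 2 := by
    constructor
    · conv_lhs => rw [← Nat.mod_add_div a (p ^ k), add_right_comm, Nat.add_mul_div_left _ _ hP]
      ring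
    · have := Nat.mod_lt a hP
      rw [Nat.div_lt_iff_lt_mul hP]
      omega
  rintro ⟨a, b⟩ ⟨a', b'⟩ hkey
  simp only [windowKey, Prod.mk.injEq, ZMod.natCast_eq_natCast_iff'] at hkey
  obtain ⟨ha, hb, hD⟩ := hkey
  funext ⟨i, j⟩
  dsimp only
  obtain ⟨ea, ca⟩ := carry (a := a) (i.2.trans_le hm)
  obtain ⟨eb, cb⟩ := carry (a := b) (j.2.trans_le hn)
  rw [hU.apply_eq_blockEntry hp k, hU.apply_eq_blockEntry hp k, Nat.ModEq.add_right i ha,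
    Nat.ModEq.add_right j hb, ea, eb, (carry (a := a') (i.2.trans_le hm)).1,
    (carry (a := b') (j.2.trans_le hn)).1, ← ha, ← hb]
  exact congrArg _ (congrFun₂ hD ⟨_, ca⟩ ⟨_, cb⟩)

end Automaton

/-- If `U ∈ F_p^{ℕ×ℕ}` is `[p,p]`-automatic, then there is a constant `K` such that the
number of distinct `m × n` rectangular subwords occurring in `U` is at most
`K · max{m,n}²` for all `m, n ≥ 1`. -/
theorem ppAutomatic_complexity (p : ℕ) (hp : p.Prime) (U : ℕ × ℕ → ZMod p)
    (hU : IsPPAutomatic p U) :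
    ∃ K : ℕ, ∀ m n : ℕ, 1 ≤ m → 1 ≤ n →
      (Set.range (fun ab : ℕ × ℕ => fun ij : Fin m × Fin n =>
        U (ab.1 + ij.1, ab.2 + ij.2))).ncard ≤ K * max m n ^ 2 := by
  obtain ⟨S, _, δ, s0, ω, hU : DFAOComputes δ s0 ω U⟩ := hU
  have : NeZero p := ⟨hp.ne_zero⟩
  refine ⟨p ^ 2 * Nat.card (Option (S → ZMod p)) ^ 4, fun m n hm _ => ?_⟩
  set M := max m n
  set k := Nat.log p M + 1
  have hMk : M ≤ p ^ k := (Nat.lt_pow_succ_log_self hp.one_lt M).le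
  have hkM : p ^ k ≤ p * M := by
    rw [pow_succ']
    exact Nat.mul_le_mul_left p (Nat.pow_log_le_self p (by omega))
  have hwindow := hU.window_factorsThrough hp.one_lt ((le_max_left m n).trans hMk)
    ((le_max_right m n).trans hMk)
  calc _ ≤ Nat.card (ZMod (p ^ k) × ZMod (p ^ k) × (Fin 2 → Fin 2 → Option (S → ZMod p))) :=
        hwindow.ncard_range_le
    _ = (p ^ k) ^ 2 * Nat.card (Option (S → ZMod p)) ^ 4 := by
        simp only [Nat.card_prod, Nat.card_zmod, Nat.card_fun, Nat.card_fin]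
        ring
    _ ≤ (p * M) ^ 2 * Nat.card (Option (S → ZMod p)) ^ 4 := by gcongr
    _ = p ^ 2 * Nat.card (Option (S → ZMod p)) ^ 4 * M ^ 2 := by ring
end

section
/- If U ∈ F_p^{ℤ×ℤ} is [−p,−p]-automatic, then there is a constant K such that the number of distinct m×n rectangular subwords of U is at most K·max{m,n}^{10} for all m,n ≥ 1. -/
/-- `U : ℤ × ℤ → F_p` is `[-p,-p]`-automatic: each of the four quadrant restrictions
`U|_{(±ℕ)×(±ℕ)}` (reflected back to `ℕ × ℕ`) is `[p,p]`-automatic. -/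
def IsNegNegAutomatic (p : ℕ) (U : ℤ × ℤ → ZMod p) : Prop :=
  IsPPAutomatic p (fun mn : ℕ × ℕ => U ((mn.1 : ℤ), (mn.2 : ℤ))) ∧
  IsPPAutomatic p (fun mn : ℕ × ℕ => U (-(mn.1 : ℤ), (mn.2 : ℤ))) ∧
  IsPPAutomatic p (fun mn : ℕ × ℕ => U ((mn.1 : ℤ), -(mn.2 : ℤ))) ∧
  IsPPAutomatic p (fun mn : ℕ × ℕ => U (-(mn.1 : ℤ), -(mn.2 : ℤ)))

/-!
Take `M = p ^ k` with `max m n ≤ M ≤ p * max m n`. Along one side of a window the coordinate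
has at most two sign segments, and on each of them its absolute value is `base + offset` with
`offset < M`; hence it equals `q * M + r` with `r < M`, where `q` takes only two consecutive
values per segment. An automaton reading least significant digits first treats the `k` digits
of `r` and then the digits of `q`, which act on states by one of at most sixteen maps `S → S`
per window. So a window is determined by `O(m n M ^ 4)` data and these maps, giving
`O(max m n ^ 6)` windows. Leading zero digits, which the definition of automaticity excludes,
are made harmless by letting the automaton also remember the state before the current block
of zeros.
-/

open Finset

def pairDigits (p K x y : ℕ) : List (ℕ × ℕ) :=
  (List.range K).map fun i => (x / p ^ i % p, y / p ^ i % p)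

section PairDigits

variable {p : ℕ}

@[simp]
lemma pairDigits_length (K x y : ℕ) : (pairDigits p K x y).length = K := by
  simp [pairDigits]

lemma getD_pairDigits {K i : ℕ} (x y : ℕ) (hi : i < K) :
    (pairDigits p K x y).getD i (0, 0) = (x / p ^ i % p, y / p ^ i % p) := by
  simp [pairDigits, List.getElem?_range hi]

lemma sum_range_digit_mul_pow (K x : ℕ) :
    ∑ i ∈ range K, x / p ^ i % p * p ^ i = x % p ^ K := by
  induction K with
  | zero => simp [Nat.mod_one]
  | succ K ih => rw [sum_range_succ, ih, Nat.mod_pow_succ]; ring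

lemma digit_add_mul_pow_of_lt {k i : ℕ} (hp : 0 < p) (q r : ℕ) (hi : i < k) :
    (q * p ^ k + r) / p ^ i % p = r / p ^ i % p := by
  obtain ⟨j, rfl⟩ := Nat.exists_eq_add_of_lt hi
  rw [show q * p ^ (i + j + 1) + r = r + q * p ^ j * p * p ^ i by ring,
    Nat.add_mul_div_right _ _ (Nat.pow_pos hp), Nat.add_mul_mod_self_right]

lemma digit_add_mul_pow_add {k r : ℕ} (hp : 0 < p) (q i : ℕ) (hr : r < p ^ k) :
    (q * p ^ k + r) / p ^ (k + i) % p = q / p ^ i % p := by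
  rw [pow_add, ← Nat.div_div_eq_div_mul, add_comm, Nat.add_mul_div_right _ _ (Nat.pow_pos hp),
    Nat.div_eq_of_lt hr, zero_add]

lemma pairDigits_add {k r r' : ℕ} (hp : 0 < p) (l q q' : ℕ) (hr : r < p ^ k)
    (hr' : r' < p ^ k) :
    pairDigits p (k + l) (q * p ^ k + r) (q' * p ^ k + r') =
      pairDigits p k r r' ++ pairDigits p l q q' := by
  simp only [pairDigits, List.range_add, List.map_append, List.map_map]
  congr 1
  · refine List.map_congr_left fun i hi => ?_
    rw [List.mem_range] at hi
    rw [digit_add_mul_pow_of_lt hp _ _ hi, digit_add_mul_pow_of_lt hp _ _ hi]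
  · refine List.map_congr_left fun i _ => ?_
    simp only [Function.comp_apply, digit_add_mul_pow_add hp _ _ hr,
      digit_add_mul_pow_add hp _ _ hr']

end PairDigits

lemma getD_append_singleton_self {α : Type*} (L : List α) (d : α) (i : ℕ) :
    (L ++ [d]).getD i d = L.getD i d := by
  rcases lt_or_ge i L.length with hi | hi
  · exact List.getD_append _ _ _ _ hi
  · rw [List.getD_append_right _ _ _ _ hi, List.getD_eq_default _ _ hi,
      List.getD_eq_getElem?_getD, List.getElem?_getD_singleton_default_eq]

lemma sum_range_getD_rdropWhile {α M : Type*} [DecidableEq α] [AddCommMonoid M] (z : α)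
    (g : α → ℕ → M) (hg : ∀ i, g z i = 0) (L : List α) :
    ∑ i ∈ range (L.rdropWhile (· = z)).length, g ((L.rdropWhile (· = z)).getD i z) i =
      ∑ i ∈ range L.length, g (L.getD i z) i := by
  induction L using List.reverseRecOn with
  | nil => rfl
  | append_singleton L d ih =>
    by_cases hd : d = z
    · subst hd
      rw [List.rdropWhile_concat_pos _ _ _ (by simp), ih, List.length_append,
        List.length_singleton, sum_range_succ, getD_append_singleton_self,
        List.getD_eq_default _ _ le_rfl, hg, add_zero]
      simp only [getD_append_singleton_self]
    · rw [List.rdropWhile_concat_neg _ _ _ (by simpa using hd)]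

/-- Unlike in `IsPPAutomatic`, the input may carry any number of leading `(0, 0)` digits. -/
def ComputesPadded {S β : Type*} (p : ℕ) (δ : S → ℕ × ℕ → S) (s0 : S) (ω : S → β)
    (V : ℕ × ℕ → β) : Prop :=
  ∀ K x y, ω ((pairDigits p K x y).foldl δ s0) = V (x % p ^ K, y % p ^ K)

section LeadingZeros

variable {S : Type*} (δ : S → ℕ × ℕ → S)

/-- Runs `δ` in the second component; the first one holds the state reached before the
current block of `(0, 0)` digits, i.e. the state that ignores leading zeros. -/
def skipZerosStep (st : S × S) (d : ℕ × ℕ) : S × S :=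
  if d = (0, 0) then (st.1, δ st.2 d) else (δ st.2 d, δ st.2 d)

lemma foldl_skipZerosStep (s0 : S) (L : List (ℕ × ℕ)) :
    L.foldl (skipZerosStep δ) (s0, s0) =
      ((L.rdropWhile (· = (0, 0))).foldl δ s0, L.foldl δ s0) := by
  induction L using List.reverseRecOn with
  | nil => rfl
  | append_singleton L d ih =>
    by_cases hd : d = (0, 0) <;> simp [ih, skipZerosStep, hd]

end LeadingZeros

lemma sum_range_getD_pairDigits (p K x y : ℕ) :
    ∑ i ∈ range (pairDigits p K x y).length,
        (((pairDigits p K x y).getD i (0, 0)).1 : ℤ) * (p : ℤ) ^ i = ((x % p ^ K : ℕ) : ℤ) ∧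
    ∑ i ∈ range (pairDigits p K x y).length,
        (((pairDigits p K x y).getD i (0, 0)).2 : ℤ) * (p : ℤ) ^ i = ((y % p ^ K : ℕ) : ℤ) := by
  simp only [pairDigits_length, ← sum_range_digit_mul_pow, Nat.cast_sum, Nat.cast_mul,
    Nat.cast_pow]
  constructor <;> refine sum_congr rfl fun i hi => ?_ <;>
    rw [getD_pairDigits _ _ (mem_range.1 hi)]

theorem IsPPAutomatic.exists_computesPadded {p : ℕ} (hp : 0 < p) {V : ℕ × ℕ → ZMod p}
    (hV : IsPPAutomatic p V) :
    ∃ (S : Type) (_ : Fintype S) (δ : S → ℕ × ℕ → S) (s0 : S) (ω : S → ZMod p),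
      ComputesPadded p δ s0 ω V := by
  obtain ⟨S, _, δ, s0, ω, hω⟩ := hV
  refine ⟨S × S, inferInstance, skipZerosStep δ, (s0, s0), ω ∘ Prod.fst, fun K x y => ?_⟩
  set L := pairDigits p K x y
  have hvalue (f : ℕ × ℕ → ℕ) (hf : f (0, 0) = 0) :
      ∑ i ∈ range (L.rdropWhile (· = (0, 0))).length,
          ((f ((L.rdropWhile (· = (0, 0))).getD i (0, 0)) : ℤ) * (p : ℤ) ^ i) =
        ∑ i ∈ range L.length, (f (L.getD i (0, 0)) : ℤ) * (p : ℤ) ^ i :=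
    sum_range_getD_rdropWhile (0, 0) (fun d i => (f d : ℤ) * (p : ℤ) ^ i) (by simp [hf]) L
  rw [Function.comp_apply, foldl_skipZerosStep]
  refine hω _ _ _ (fun d hd => ?_) (fun h => ?_) ?_ ?_
  · obtain ⟨i, -, rfl⟩ := List.mem_map.1 ((List.rdropWhile_prefix _ L).subset hd)
    exact ⟨Nat.mod_lt _ hp, Nat.mod_lt _ hp⟩
  · have hlast := List.rdropWhile_last_not _ L h
    rw [decide_eq_true_iff, Prod.ext_iff] at hlast
    tauto
  · rw [hvalue Prod.fst rfl, (sum_range_getD_pairDigits p K x y).1]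
  · rw [hvalue Prod.snd rfl, (sum_range_getD_pairDigits p K x y).2]

lemma foldl_pi {ι : Type*} {S : ι → Type*} (δ : ∀ i, S i → ℕ × ℕ → S i) (L : List (ℕ × ℕ))
    (s : ∀ i, S i) (i : ι) :
    L.foldl (fun s d i => δ i (s i) d) s i = L.foldl (δ i) (s i) := by
  induction L generalizing s with
  | nil => rfl
  | cons d L ih => exact ih _

theorem exists_computesPadded_pi {ι : Type} {β : Type*} [Fintype ι] [DecidableEq ι] {p : ℕ}
    {V : ι → ℕ × ℕ → β}
    (hV : ∀ i, ∃ (S : Type) (_ : Fintype S) (δ : S → ℕ × ℕ → S) (s0 : S) (ω : S → β),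
      ComputesPadded p δ s0 ω (V i)) :
    ∃ (S : Type) (_ : Fintype S) (δ : S → ℕ × ℕ → S) (s0 : S) (ω : ι → S → β),
      ∀ i, ComputesPadded p δ s0 (ω i) (V i) := by
  choose S hS δ s0 ω hω using hV
  exact ⟨∀ i, S i, inferInstance, fun s d i => δ i (s i) d, s0, fun i s => ω i (s i),
    fun i K x y => (congrArg (ω i) (foldl_pi δ _ s0 i)).trans (hω i K x y)⟩

def signedNat (s : Bool) (x : ℕ) : ℤ := cond s (-(x : ℤ)) x

theorem IsNegNegAutomatic.isPPAutomatic_quadrant {p : ℕ} {U : ℤ × ℤ → ZMod p}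
    (hU : IsNegNegAutomatic p U) (s : Bool × Bool) :
    IsPPAutomatic p (fun xy => U (signedNat s.1 xy.1, signedNat s.2 xy.2)) := by
  obtain ⟨h₁, h₂, h₃, h₄⟩ := hU
  rcases s with ⟨_ | _, _ | _⟩
  exacts [h₁, h₃, h₂, h₄]

theorem IsNegNegAutomatic.exists_computesPadded {p : ℕ} (hp : 0 < p) {U : ℤ × ℤ → ZMod p}
    (hU : IsNegNegAutomatic p U) :
    ∃ (S : Type) (_ : Fintype S) (δ : S → ℕ × ℕ → S) (s0 : S) (ω : Bool × Bool → S → ZMod p),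
      ∀ s, ComputesPadded p δ s0 (ω s) (fun xy => U (signedNat s.1 xy.1, signedNat s.2 xy.2)) :=
  exists_computesPadded_pi fun s => (hU.isPPAutomatic_quadrant s).exists_computesPadded hp

/-- For `i < m`, the point `a + i` is negative iff `i < negCount m a`. On each of the two
segments `|a + i| = segmentBase m a s + segmentOffset (negCount m a) i`, offsets being counted
away from the origin. -/
def negCount (m : ℕ) (a : ℤ) : ℕ := min m (-a).toNat

def segmentBase (m : ℕ) (a : ℤ) : Bool → ℕ
  | true => (-a).toNat - negCount m a + 1
  | false => (a + negCount m a).toNat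

def segmentOffset (c i : ℕ) : ℕ := if i < c then c - 1 - i else i - c

lemma negCount_le (m : ℕ) (a : ℤ) : negCount m a ≤ m := min_le_left _ _

lemma segmentOffset_lt {c i m : ℕ} (hc : c ≤ m) (hi : i < m) : segmentOffset c i < m := by
  unfold segmentOffset; split_ifs <;> omega

lemma add_eq_signedNat {m i : ℕ} (a : ℤ) (hi : i < m) :
    a + i = signedNat (decide (i < negCount m a))
      (segmentBase m a (decide (i < negCount m a)) + segmentOffset (negCount m a) i) := by
  unfold signedNat segmentOffset
  by_cases h : i < negCount m a
  · simp only [h, decide_true, cond_true, segmentBase, if_true]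
    unfold negCount at h ⊢
    omega
  · simp only [h, decide_false, cond_false, segmentBase, if_false]
    unfold negCount at h ⊢
    omega

lemma add_eq_carry_mul_add_mod {B t M : ℕ} (ht : t < M) :
    B + t = (B / M + (decide (M ≤ B % M + t)).toNat) * M + (B % M + t) % M := by
  have hR := Nat.mod_lt B (by omega : 0 < M)
  conv_lhs => rw [← Nat.div_add_mod' B M]
  generalize B / M = Q
  generalize B % M = R at hR ⊢
  by_cases hc : M ≤ R + t
  · rw [Nat.mod_eq_sub_mod hc, Nat.mod_eq_of_lt (by omega)]
    simp only [hc, decide_true, Bool.toNat_true, add_mul, one_mul]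
    omega
  · rw [Nat.mod_eq_of_lt (by omega)]
    simp only [hc, decide_false, Bool.toNat_false, add_zero]
    omega

lemma mul_pow_add_lt_pow_add {p q r k l : ℕ} (hq : q < p ^ l) (hr : r < p ^ k) :
    q * p ^ k + r < p ^ (k + l) :=
  calc q * p ^ k + r < (q + 1) * p ^ k := by rw [add_one_mul]; omega
    _ ≤ p ^ l * p ^ k := Nat.mul_le_mul_right _ hq
    _ = p ^ (k + l) := by rw [pow_add, mul_comm]

section Jump

variable {S β : Type*} {p : ℕ} (δ : S → ℕ × ℕ → S)

/-- Reads the digit pairs of `q` and `q'`; `q + q'` is merely some length `L` with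
`q, q' < p ^ L`. -/
def jump (p q q' : ℕ) (s : S) : S := (pairDigits p (q + q') q q').foldl δ s

lemma ComputesPadded.apply_jump {s0 : S} {ω : S → β} {V : ℕ × ℕ → β} (hp : 1 < p)
    (h : ComputesPadded p δ s0 ω V) (q q' : ℕ) {k r r' : ℕ} (hr : r < p ^ k) (hr' : r' < p ^ k) :
    ω (jump δ p q q' ((pairDigits p k r r').foldl δ s0)) = V (q * p ^ k + r, q' * p ^ k + r') := by
  have hlen (x : ℕ) (hx : x ≤ q + q') : x < p ^ (q + q') :=
    (Nat.lt_pow_self hp).trans_le (Nat.pow_le_pow_right (by omega) hx)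
  rw [jump, ← List.foldl_append, ← pairDigits_add (by omega) _ _ _ hr hr', h,
    Nat.mod_eq_of_lt (mul_pow_add_lt_pow_add (hlen q (by omega)) hr),
    Nat.mod_eq_of_lt (mul_pow_add_lt_pow_add (hlen q' (by omega)) hr')]

end Jump

structure CoordDigit where
  sign : Bool
  carry : Bool
  low : ℕ

/-- Position `i` of a window whose corner coordinate has `c` negative positions and residues
`R s` of the segment bases modulo `M`. -/
def readCoord (M c : ℕ) (R : Bool → ℕ) (i : ℕ) : CoordDigit :=
  let s := decide (i < c)
  let u := R s + segmentOffset c i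
  ⟨s, decide (M ≤ u), u % M⟩

lemma add_eq_signedNat_readCoord {m M i : ℕ} (a : ℤ) (hi : i < m) (hm : m ≤ M) :
    let d := readCoord M (negCount m a) (fun s => segmentBase m a s % M) i
    a + i = signedNat d.sign ((segmentBase m a d.sign / M + d.carry.toNat) * M + d.low) ∧
      d.low < M := by
  refine ⟨?_, Nat.mod_lt _ (by omega)⟩
  rw [add_eq_signedNat a hi,
    add_eq_carry_mul_add_mod ((segmentOffset_lt (negCount_le m a) hi).trans_le hm)]
  rfl

def window {β : Type*} (U : ℤ × ℤ → β) (m n : ℕ) (ab : ℤ × ℤ) : Fin m × Fin n → β :=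
  fun ij => U (ab.1 + ij.1, ab.2 + ij.2)

abbrev WindowCode (S : Type*) (m n M : ℕ) :=
  (Fin (m + 1) × (Bool → Fin M)) × (Fin (n + 1) × (Bool → Fin M)) ×
    (Bool → Bool → Bool → Bool → S → S)

/-- The code stores the coordinate data read by `readCoord` and, for each pair of signs and of
carries, the effect of the high-order digits on the automaton. -/
def decodeWindow {S β : Type*} (p k m n : ℕ) (δ : S → ℕ × ℕ → S) (s0 : S)
    (ω : Bool × Bool → S → β) (code : WindowCode S m n (p ^ k)) (ij : Fin m × Fin n) : β :=
  let x := readCoord (p ^ k) code.1.1 (fun s => code.1.2 s) ij.1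
  let y := readCoord (p ^ k) code.2.1.1 (fun s => code.2.1.2 s) ij.2
  ω (x.sign, y.sign)
    (code.2.2 x.sign y.sign x.carry y.carry ((pairDigits p k x.low y.low).foldl δ s0))

theorem window_mem_range_decodeWindow {S β : Type*} {p k m n : ℕ} (hp : 1 < p)
    {δ : S → ℕ × ℕ → S} {s0 : S} {ω : Bool × Bool → S → β} {U : ℤ × ℤ → β}
    (hU : ∀ s, ComputesPadded p δ s0 (ω s) (fun xy => U (signedNat s.1 xy.1, signedNat s.2 xy.2)))
    (hm : m ≤ p ^ k) (hn : n ≤ p ^ k) (ab : ℤ × ℤ) :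
    window U m n ab ∈ Set.range (decodeWindow p k m n δ s0 ω) := by
  have hM : 0 < p ^ k := Nat.pow_pos (by omega)
  obtain ⟨a, b⟩ := ab
  let B := segmentBase m a
  let B' := segmentBase n b
  refine ⟨((⟨negCount m a, Nat.lt_succ_of_le (negCount_le m a)⟩,
      fun s => ⟨B s % p ^ k, Nat.mod_lt _ hM⟩),
    (⟨negCount n b, Nat.lt_succ_of_le (negCount_le n b)⟩,
      fun s => ⟨B' s % p ^ k, Nat.mod_lt _ hM⟩),
    fun sx sy cx cy => jump δ p (B sx / p ^ k + cx.toNat) (B' sy / p ^ k + cy.toNat)), ?_⟩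
  funext ⟨i, j⟩
  obtain ⟨hx, hlx⟩ := add_eq_signedNat_readCoord a i.isLt hm
  obtain ⟨hy, hly⟩ := add_eq_signedNat_readCoord b j.isLt hn
  simp only [window, decodeWindow]
  rw [(hU _).apply_jump δ hp _ _ hlx hly, ← hx, ← hy]

lemma ncard_range_le_nat_card {α β γ : Type*} [Finite γ] {f : α → β} {g : γ → β}
    (h : ∀ a, f a ∈ Set.range g) : (Set.range f).ncard ≤ Nat.card γ :=
  calc (Set.range f).ncard ≤ (Set.range g).ncard :=
        Set.ncard_le_ncard (Set.range_subset_iff.2 h) (Set.finite_range g)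
    _ ≤ Nat.card γ := by
        rw [← Set.image_univ]
        exact (Set.ncard_image_le Set.finite_univ).trans (Set.ncard_univ γ).le

theorem ncard_range_window_le {S β : Type*} [Finite S] {p k m n : ℕ} (hp : 1 < p)
    {δ : S → ℕ × ℕ → S} {s0 : S} {ω : Bool × Bool → S → β} {U : ℤ × ℤ → β}
    (hU : ∀ s, ComputesPadded p δ s0 (ω s) (fun xy => U (signedNat s.1 xy.1, signedNat s.2 xy.2)))
    (hm : m ≤ p ^ k) (hn : n ≤ p ^ k) :
    (Set.range (window U m n)).ncard ≤
      (m + 1) * (p ^ k) ^ 2 *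
        ((n + 1) * (p ^ k) ^ 2 * Nat.card (Bool → Bool → Bool → Bool → S → S)) :=
  calc (Set.range (window U m n)).ncard ≤ Nat.card (WindowCode S m n (p ^ k)) :=
        ncard_range_le_nat_card (window_mem_range_decodeWindow hp hU hm hn)
    _ = _ := by simp [WindowCode, Nat.card_prod, Nat.card_fun]

lemma exists_le_pow_le_mul {p N : ℕ} (hp : 1 < p) (hN : N ≠ 0) :
    ∃ k, N ≤ p ^ k ∧ p ^ k ≤ p * N :=
  ⟨Nat.log p N + 1, (Nat.lt_pow_succ_log_self hp N).le,
    by rw [pow_succ']; exact Nat.mul_le_mul_left p (Nat.pow_log_le_self p hN)⟩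

/-- If `U ∈ F_p^{ℤ×ℤ}` is `[-p,-p]`-automatic, then there is a constant `K` such that the
number of distinct `m × n` rectangular subwords of `U` is at most `K · max{m,n}^{10}` for
all `m, n ≥ 1`. -/
theorem negNegAutomatic_complexity (p : ℕ) (hp : p.Prime) (U : ℤ × ℤ → ZMod p)
    (hU : IsNegNegAutomatic p U) :
    ∃ K : ℕ, ∀ m n : ℕ, 1 ≤ m → 1 ≤ n →
      (Set.range (fun ab : ℤ × ℤ => fun ij : Fin m × Fin n =>
        U (ab.1 + (ij.1 : ℤ), ab.2 + (ij.2 : ℤ)))).ncard ≤ K * max m n ^ 10 := by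
  obtain ⟨S, _, δ, s0, ω, hω⟩ := hU.exists_computesPadded hp.pos
  set C := Nat.card (Bool → Bool → Bool → Bool → S → S)
  refine ⟨4 * p ^ 4 * C, fun m n hm hn => ?_⟩
  set N := max m n
  obtain ⟨k, hNk, hkN⟩ := exists_le_pow_le_mul hp.one_lt (by omega : N ≠ 0)
  calc (Set.range (window U m n)).ncard
      ≤ (m + 1) * (p ^ k) ^ 2 * ((n + 1) * (p ^ k) ^ 2 * C) :=
        ncard_range_window_le hp.one_lt hω ((le_max_left m n).trans hNk)
          ((le_max_right m n).trans hNk)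
    _ ≤ (2 * N) * (p * N) ^ 2 * ((2 * N) * (p * N) ^ 2 * C) := by gcongr <;> omega
    _ = 4 * p ^ 4 * C * N ^ 6 := by ring
    _ ≤ 4 * p ^ 4 * C * N ^ 10 := by gcongr <;> omega
end

section
/- Let Φ : F_p^ℤ → F_p^ℤ be a linear cellular automaton with left radius ℓ and right radius r, and set 𝕀 = (ℤ×{0}) ∪ ⋃_{i=0}^{ℓ+r−1} ({i} × (−ℕ)). Then every function U : 𝕀 → F_p extends uniquely to a spacetime diagram U ∈ F_p^{ℤ×ℤ} for Φ. -/
set_option linter.unnecessarySeqFocus false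

namespace STD

variable {p : ℕ}

def mu (ℓ r : ℕ) (m : ℤ) : ℕ :=
  if m < 0 then (ℓ + r) + (-m).toNat else (m - (ℓ : ℤ) - r + 1).toNat

noncomputable def rowExt (ℓ r : ℕ) (α : ℤ → ZMod p) (v a : ℤ → ZMod p) (m : ℤ) : ZMod p :=
  if _h0 : 0 ≤ m ∧ m < (ℓ : ℤ) + r then a m
  else if _hneg : m < 0 then
    (α (-(ℓ : ℤ)))⁻¹ *
      (v (m + ℓ) - ∑ i ∈ (Finset.Icc (-(ℓ : ℤ) + 1) (r : ℤ)).attach,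
        α i.1 * rowExt ℓ r α v a (m + ℓ + i.1))
  else
    (α (r : ℤ))⁻¹ *
      (v (m - r) - ∑ i ∈ (Finset.Icc (-(ℓ : ℤ)) ((r : ℤ) - 1)).attach,
        α i.1 * rowExt ℓ r α v a (m - r + i.1))
termination_by mu ℓ r m
decreasing_by
  all_goals
    rcases i with ⟨i, hi⟩
    simp only [Finset.mem_Icc] at hi
    simp only [mu]
    split_ifs <;> omega

lemma rowExt_window (ℓ r : ℕ) (α v a : ℤ → ZMod p) (m : ℤ)
    (h1 : 0 ≤ m) (h2 : m < (ℓ : ℤ) + r) :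
    rowExt ℓ r α v a m = a m := by
  rw [rowExt, dif_pos ⟨h1, h2⟩]

lemma icc_top_split (ℓ r : ℕ) :
    Finset.Icc (-(ℓ : ℤ)) (r : ℤ) = insert (r : ℤ) (Finset.Icc (-(ℓ : ℤ)) ((r : ℤ) - 1)) := by
  ext x; simp only [Finset.mem_Icc, Finset.mem_insert]; omega

lemma icc_bot_split (ℓ r : ℕ) :
    Finset.Icc (-(ℓ : ℤ)) (r : ℤ) = insert (-(ℓ : ℤ)) (Finset.Icc (-(ℓ : ℤ) + 1) (r : ℤ)) := by
  ext x; simp only [Finset.mem_Icc, Finset.mem_insert]; omega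

lemma rowExt_eq (hp : p.Prime) (ℓ r : ℕ) (α : ℤ → ZMod p)
    (hl : α (-(ℓ : ℤ)) ≠ 0) (hr : α (r : ℤ) ≠ 0) (v a : ℤ → ZMod p) (m : ℤ) :
    ∑ i ∈ Finset.Icc (-(ℓ : ℤ)) (r : ℤ), α i * rowExt ℓ r α v a (m + i) = v m := by
  haveI : Fact p.Prime := ⟨hp⟩
  by_cases hm : (ℓ : ℤ) ≤ m
  · -- use the definition at m + r (right branch)
    have hdef : rowExt ℓ r α v a (m + r) =
        (α (r : ℤ))⁻¹ *
          (v (m + r - r) - ∑ i ∈ (Finset.Icc (-(ℓ : ℤ)) ((r : ℤ) - 1)).attach,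
            α i.1 * rowExt ℓ r α v a (m + r - r + i.1)) := by
      rw [rowExt, dif_neg (by omega), dif_neg (by omega)]
    simp only [add_sub_cancel_right] at hdef
    have key : α (r : ℤ) * rowExt ℓ r α v a (m + r) =
        v m - ∑ i ∈ Finset.Icc (-(ℓ : ℤ)) ((r : ℤ) - 1), α i * rowExt ℓ r α v a (m + i) := by
      rw [hdef, ← mul_assoc, mul_inv_cancel₀ hr, one_mul,
        Finset.sum_attach _ (fun i => α i * rowExt ℓ r α v a (m + i))]
    rw [icc_top_split, Finset.sum_insert (by simp [Finset.mem_Icc]), key]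
    ring
  · -- use the definition at m - ℓ (negative branch)
    have hdef : rowExt ℓ r α v a (m - ℓ) =
        (α (-(ℓ : ℤ)))⁻¹ *
          (v (m - ℓ + ℓ) - ∑ i ∈ (Finset.Icc (-(ℓ : ℤ) + 1) (r : ℤ)).attach,
            α i.1 * rowExt ℓ r α v a (m - ℓ + ℓ + i.1)) := by
      rw [rowExt, dif_neg (by omega), dif_pos (by omega)]
    simp only [sub_add_cancel] at hdef
    have hc : m + -(ℓ:ℤ) = m - ℓ := by ring
    have key : α (-(ℓ : ℤ)) * rowExt ℓ r α v a (m + -(ℓ:ℤ)) =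
        v m - ∑ i ∈ Finset.Icc (-(ℓ : ℤ) + 1) (r : ℤ), α i * rowExt ℓ r α v a (m + i) := by
      rw [hc, hdef, ← mul_assoc, mul_inv_cancel₀ hl, one_mul,
        Finset.sum_attach _ (fun i => α i * rowExt ℓ r α v a (m + i))]
    rw [icc_bot_split, Finset.sum_insert (by simp [Finset.mem_Icc]), key]
    ring

end STD

namespace STD2
open STD
variable {p : ℕ}

lemma row_unique (hp : p.Prime) (ℓ r : ℕ) (α : ℤ → ZMod p)
    (hl : α (-(ℓ : ℤ)) ≠ 0) (hr : α (r : ℤ) ≠ 0) (v a w w' : ℤ → ZMod p)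
    (hw1 : ∀ m, 0 ≤ m → m < (ℓ : ℤ) + r → w m = a m)
    (hw2 : ∀ m, ∑ i ∈ Finset.Icc (-(ℓ : ℤ)) (r : ℤ), α i * w (m + i) = v m)
    (hw1' : ∀ m, 0 ≤ m → m < (ℓ : ℤ) + r → w' m = a m)
    (hw2' : ∀ m, ∑ i ∈ Finset.Icc (-(ℓ : ℤ)) (r : ℤ), α i * w' (m + i) = v m) :
    w = w' := by
  haveI : Fact p.Prime := ⟨hp⟩
  suffices H : ∀ N m, mu ℓ r m < N → w m = w' m by
    funext m; exact H (mu ℓ r m + 1) m (Nat.lt_succ_self _)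
  intro N
  induction N with
  | zero => intro m h; omega
  | succ N ih =>
    intro m h
    by_cases hbase : 0 ≤ m ∧ m < (ℓ : ℤ) + r
    · rw [hw1 m hbase.1 hbase.2, hw1' m hbase.1 hbase.2]
    by_cases hneg : m < 0
    · -- equation at m + ℓ, bottom term
      have e1 := hw2 (m + ℓ); have e2 := hw2' (m + ℓ)
      rw [icc_bot_split] at e1 e2
      rw [Finset.sum_insert (by simp [Finset.mem_Icc])] at e1 e2
      have hc : m + (ℓ:ℤ) + -(ℓ:ℤ) = m := by ring
      rw [hc] at e1 e2
      have hsum : ∑ i ∈ Finset.Icc (-(ℓ : ℤ) + 1) (r : ℤ), α i * w (m + ℓ + i) =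
          ∑ i ∈ Finset.Icc (-(ℓ : ℤ) + 1) (r : ℤ), α i * w' (m + ℓ + i) := by
        refine Finset.sum_congr rfl fun i hi => ?_
        simp only [Finset.mem_Icc] at hi
        rw [ih (m + ℓ + i) (by simp only [mu] at h ⊢; split_ifs at h ⊢ <;> omega)]
      have : α (-(ℓ : ℤ)) * w m = α (-(ℓ : ℤ)) * w' m := by
        have := e1.trans e2.symm
        rw [hsum] at this
        exact add_right_cancel this
      exact mul_left_cancel₀ hl this
    · -- equation at m - r, top term
      have e1 := hw2 (m - r); have e2 := hw2' (m - r)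
      rw [icc_top_split] at e1 e2
      rw [Finset.sum_insert (by simp [Finset.mem_Icc])] at e1 e2
      have hc : m - (r:ℤ) + (r:ℤ) = m := by ring
      rw [hc] at e1 e2
      have hsum : ∑ i ∈ Finset.Icc (-(ℓ : ℤ)) ((r : ℤ) - 1), α i * w (m - r + i) =
          ∑ i ∈ Finset.Icc (-(ℓ : ℤ)) ((r : ℤ) - 1), α i * w' (m - r + i) := by
        refine Finset.sum_congr rfl fun i hi => ?_
        simp only [Finset.mem_Icc] at hi
        rw [ih (m - r + i) (by simp only [mu] at h ⊢; split_ifs at h ⊢ <;> omega)]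
      have : α (r : ℤ) * w m = α (r : ℤ) * w' m := by
        have := e1.trans e2.symm
        rw [hsum] at this
        exact add_right_cancel this
      exact mul_left_cancel₀ hr this

end STD2

namespace STD3
open STD STD2
variable {p : ℕ}

noncomputable def rowsPos (ℓ r : ℕ) (α : ℤ → ZMod p) (f : ℤ × ℤ → ZMod p) : ℕ → ℤ → ZMod p
  | 0 => fun m => f (m, 0)
  | n + 1 => fun m => ∑ i ∈ Finset.Icc (-(ℓ : ℤ)) (r : ℤ), α i * rowsPos ℓ r α f n (m + i)

noncomputable def rowsNeg (ℓ r : ℕ) (α : ℤ → ZMod p) (f : ℤ × ℤ → ZMod p) : ℕ → ℤ → ZMod p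
  | 0 => fun m => f (m, 0)
  | k + 1 => rowExt ℓ r α (rowsNeg ℓ r α f k) (fun m => f (m, -(k + 1 : ℕ)))

noncomputable def bigU (ℓ r : ℕ) (α : ℤ → ZMod p) (f : ℤ × ℤ → ZMod p) (q : ℤ × ℤ) : ZMod p :=
  if 0 ≤ q.2 then rowsPos ℓ r α f q.2.toNat q.1 else rowsNeg ℓ r α f (-q.2).toNat q.1

theorem main (p : ℕ) (hp : p.Prime)
    (ℓ r : ℕ) (α : ℤ → ZMod p)
    (hl : α (-(ℓ : ℤ)) ≠ 0) (hr : α (r : ℤ) ≠ 0)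
    (f : ℤ × ℤ → ZMod p) :
    ∃! U : ℤ × ℤ → ZMod p,
      (∀ q : ℤ × ℤ, (q.2 = 0 ∨ (0 ≤ q.1 ∧ q.1 < (ℓ : ℤ) + (r : ℤ) ∧ q.2 ≤ 0)) → U q = f q) ∧
      (∀ m n : ℤ, U (m, n + 1) = ∑ i ∈ Finset.Icc (-(ℓ : ℤ)) (r : ℤ), α i * U (m + i, n)) := by
  refine ⟨bigU ℓ r α f, ⟨?_, ?_⟩, ?_⟩
  · -- values on 𝕀
    rintro ⟨m, n⟩ (h | ⟨h1, h2, h3⟩)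
    · simp only at h; subst h
      simp [bigU, rowsPos]
    · simp only at h1 h2 h3 ⊢
      rcases eq_or_lt_of_le h3 with h0 | h0
      · subst h0; simp [bigU, rowsPos]
      · have hn : ¬ (0 ≤ n) := by omega
        simp only [bigU, if_neg hn]
        obtain ⟨k, hk⟩ : ∃ k : ℕ, (-n).toNat = k + 1 := ⟨(-n).toNat - 1, by omega⟩
        rw [hk]
        show rowExt ℓ r α _ _ m = f (m, n)
        rw [rowExt_window ℓ r α _ _ m h1 h2]
        congr 1
        ext <;> simp <;> omega
  · -- the evolution equation
    intro m n
    rcases le_or_gt 0 n with hn | hn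
    · have h1 : (n + 1).toNat = n.toNat + 1 := by omega
      have h2 : ∀ k, bigU ℓ r α f (k, n) = rowsPos ℓ r α f n.toNat k := fun k => if_pos hn
      simp only [bigU, if_pos (by omega : (0:ℤ) ≤ n + 1), h1]
      show rowsPos ℓ r α f (n.toNat + 1) m = _
      rw [rowsPos]
      exact Finset.sum_congr rfl fun i _ => by rw [if_pos hn]
    · -- n < 0 : row n is rowsNeg k with k = (-n).toNat ≥ 1
      obtain ⟨k, hk⟩ : ∃ k : ℕ, (-n).toNat = k + 1 := ⟨(-n).toNat - 1, by omega⟩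
      have hrown : ∀ x, bigU ℓ r α f (x, n) = rowsNeg ℓ r α f (k + 1) x := by
        intro x; simp only [bigU, if_neg (by omega : ¬ (0:ℤ) ≤ n), hk]
      have hkey := rowExt_eq hp ℓ r α hl hr (rowsNeg ℓ r α f k)
        (fun x => f (x, -(k + 1 : ℕ))) m
      have hrow1 : bigU ℓ r α f (m, n + 1) = rowsNeg ℓ r α f k m := by
        rcases Nat.eq_zero_or_pos k with h0 | h0
        · subst h0
          have hn1 : n + 1 = 0 := by omega
          rw [hn1]
          simp [bigU, rowsPos, rowsNeg]
        · have : ¬ (0 ≤ n + 1) := by omega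
          simp only [bigU, if_neg this]
          congr 1
          omega
      rw [hrow1]
      rw [← hkey]
      refine Finset.sum_congr rfl fun i _ => ?_
      rw [hrown]
      rfl
  · -- uniqueness
    rintro W ⟨hW1, hW2⟩
    have hpos : ∀ k : ℕ, ∀ m : ℤ, W (m, (k : ℤ)) = rowsPos ℓ r α f k m := by
      intro k
      induction k with
      | zero => intro m; simpa [rowsPos] using hW1 (m, 0) (Or.inl rfl)
      | succ k ih =>
        intro m
        have : ((k : ℤ) + 1) = ((k + 1 : ℕ) : ℤ) := by push_cast; ring
        rw [rowsPos, ← this, hW2 m k]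
        exact Finset.sum_congr rfl fun i _ => by rw [ih]
    have hneg : ∀ k : ℕ, ∀ m : ℤ, W (m, -(k : ℤ)) = rowsNeg ℓ r α f k m := by
      intro k
      induction k with
      | zero => intro m; simpa [rowsNeg] using hW1 (m, 0) (Or.inl rfl)
      | succ k ih =>
        have := row_unique hp ℓ r α hl hr (rowsNeg ℓ r α f k)
          (fun x => f (x, -(k + 1 : ℕ))) (fun x => W (x, -((k:ℤ) + 1)))
          (rowExt ℓ r α (rowsNeg ℓ r α f k) (fun x => f (x, -(k + 1 : ℕ))))
          (fun x h1 h2 => by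
            have := hW1 (x, -((k:ℤ) + 1)) (Or.inr ⟨h1, h2, by omega⟩)
            simpa using this)
          (fun x => by
            have h := hW2 x (-((k:ℤ) + 1))
            have hc : -((k:ℤ) + 1) + 1 = -(k:ℤ) := by ring
            rw [hc, ih x] at h
            exact h.symm)
          (fun x h1 h2 => rowExt_window ℓ r α _ _ x h1 h2)
          (fun x => rowExt_eq hp ℓ r α hl hr _ _ x)
        intro m
        have hc2 : -((k + 1 : ℕ) : ℤ) = -((k:ℤ) + 1) := by push_cast; ring
        rw [hc2]
        have := congrFun this m
        rw [this]
        rfl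
    funext q
    obtain ⟨m, n⟩ := q
    rcases le_or_gt 0 n with hn | hn
    · have : n = ((n.toNat : ℕ) : ℤ) := by omega
      rw [this, hpos n.toNat m]
      simp [bigU, if_pos hn]
      congr 1
      omega
    · have : n = -(((-n).toNat : ℕ) : ℤ) := by omega
      rw [this, hneg (-n).toNat m]
      simp only [bigU]
      rw [if_neg (by omega : ¬ (0:ℤ) ≤ -(((-n).toNat : ℕ) : ℤ))]
      congr 1
      omega

end STD3


/-- Let `Φ` be a linear cellular automaton on `F_p^ℤ` with left radius `ℓ` and right radius
`r`, local rule `(Φ v)_m = Σ_{i=-ℓ}^{r} α_i v_{m+i}` with `α_{-ℓ} ≠ 0` and `α_r ≠ 0`.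
Set `𝕀 = (ℤ×{0}) ∪ ⋃_{i=0}^{ℓ+r-1} ({i} × (-ℕ))`.  Then every assignment of values on `𝕀`
extends uniquely to a spacetime diagram `U ∈ F_p^{ℤ×ℤ}` for `Φ`. -/
theorem unique_extension_to_spacetime_diagram (p : ℕ) (hp : p.Prime)
    (ℓ r : ℕ) (α : ℤ → ZMod p)
    (hl : α (-(ℓ : ℤ)) ≠ 0) (hr : α (r : ℤ) ≠ 0)
    (f : ℤ × ℤ → ZMod p) :
    ∃! U : ℤ × ℤ → ZMod p,
      (∀ q : ℤ × ℤ, (q.2 = 0 ∨ (0 ≤ q.1 ∧ q.1 < (ℓ : ℤ) + (r : ℤ) ∧ q.2 ≤ 0)) → U q = f q) ∧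
      (∀ m n : ℤ, U (m, n + 1) = ∑ i ∈ Finset.Icc (-(ℓ : ℤ)) (r : ℤ), α i * U (m + i, n)) := by
  exact STD3.main p hp ℓ r α hl hr f
end

section
/- Let u ∈ F_p^ℕ be the fixed point of the base-p parity substitution θ (θ(a) = (0 + a)(1 + a)⋯((p−1) + a), additions mod p) starting with 0, so that u_m is the sum mod p of the base-p digits of m. Then u is not eventually periodic: for every k ≥ 1 there exist arbitrarily large m with u_m ≠ u_{m+k}. -/
/-! If `1 ≤ k ≤ p ^ t`, the numbers `p ^ t - k` and `p ^ (t + 1) - k` differ by the single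
digit `p - 1` in position `t`, so their digit sums differ by `p - 1 ≡ -1 (mod p)` and cannot both
be `≡ 1`. Adding `k` to either gives a power of `p`, whose digit sum is `1`. -/

namespace Nat

theorem digits_sum_add_base_pow_mul {b t a : ℕ} (hb : 1 < b) (ha : a < b ^ t) (c : ℕ) :
    (b.digits (a + b ^ t * c)).sum = (b.digits a).sum + (b.digits c).sum := by
  rcases c.eq_zero_or_pos with rfl | hc
  · simp
  obtain ⟨z, hz⟩ := Nat.exists_eq_add_of_le ((digits_length_le_iff hb a).2 ha)
  rw [hz, ← digits_append_zeroes_append_digits hb hc]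
  simp

theorem digits_sum_of_lt {b d : ℕ} (hd : d < b) : (b.digits d).sum = d := by
  rcases d.eq_zero_or_pos with rfl | hd0
  · simp
  · simp [digits_of_lt b d hd0.ne' hd]

theorem digits_sum_base_pow {b : ℕ} (hb : 1 < b) (t : ℕ) : (b.digits (b ^ t)).sum = 1 := by
  simpa [digits_sum_of_lt hb] using digits_sum_add_base_pow_mul hb (pow_pos (by omega) t) 1

theorem digits_sum_base_pow_succ_sub {b t k : ℕ} (hb : 1 < b) (hk : 0 < k) (hkt : k ≤ b ^ t) :
    (b.digits (b ^ (t + 1) - k)).sum = (b.digits (b ^ t - k)).sum + (b - 1) := by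
  have hsplit : b ^ (t + 1) - k = (b ^ t - k) + b ^ t * (b - 1) := by
    rw [pow_succ, Nat.mul_sub, mul_one]
    have : b ^ t ≤ b ^ t * b := Nat.le_mul_of_pos_right _ (by omega)
    omega
  rw [hsplit, digits_sum_add_base_pow_mul hb (show b ^ t - k < b ^ t by omega),
    digits_sum_of_lt (show b - 1 < b by omega)]

end Nat

/-- The fixed point of the base-`p` parity substitution starting with `0` is the base-`p`
digit-sum sequence `u_m = (sum of the base-p digits of m) mod p`.  It is not eventually
periodic: for every `k ≥ 1` there exist arbitrarily large `m` with `u_m ≠ u_{m+k}`. -/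
theorem parity_fixed_point_not_eventually_periodic (p : ℕ) (hp : p.Prime) :
    ∀ k : ℕ, 1 ≤ k → ∀ N : ℕ, ∃ m : ℕ, N ≤ m ∧
      (((p.digits m).sum : ZMod p) ≠ ((p.digits (m + k)).sum : ZMod p)) := by
  intro k hk N
  have hp1 := hp.one_lt
  have : Fact (1 < p) := ⟨hp1⟩
  obtain ⟨t, ht⟩ : ∃ t, N + k < p ^ t := ⟨_, Nat.lt_pow_self hp1⟩
  have hmono : p ^ t ≤ p ^ (t + 1) := Nat.pow_le_pow_right hp.pos t.le_succ
  have hpow : ∀ s, k ≤ p ^ s → (p.digits (p ^ s - k + k)).sum = 1 := fun s hs ↦ by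
    rw [Nat.sub_add_cancel hs, Nat.digits_sum_base_pow hp1]
  by_cases h : ((p.digits (p ^ t - k)).sum : ZMod p) = 1
  · refine ⟨p ^ (t + 1) - k, by omega, ?_⟩
    rw [hpow _ (by omega), Nat.digits_sum_base_pow_succ_sub hp1 hk (by omega)]
    push_cast [Nat.cast_pred hp.pos, h, ZMod.natCast_self]
    simp
  · exact ⟨p ^ t - k, by omega, by rwa [hpow _ (by omega), Nat.cast_one]⟩
end

section
/- Let p = 3, let Φ : F_3^ℤ → F_3^ℤ be the cellular automaton with generating polynomial φ(x) = x + 1, let θ be a primitive bijective length-3 substitution on F_3, and let u ∈ F_3^ℤ be a bi-infinite fixed point of θ. Then for each k ≥ 1, each n ≥ 0, and each m ∈ ℤ: Φ^{n·3^k}(u)|_{[m·3^k, (m+1)·3^k − 1]} lies in {θ^k(0), θ^k(1), θ^k(2)} if n is even and in {2θ^k(0), 2θ^k(1), 2θ^k(2)} if n is odd. -/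
/-!
Cut `u` into the blocks `[m·3^k, (m+1)·3^k)`; since `u` is fixed by `θ`, the `m`-th block is
`θ^k(u_m)`. By the Frobenius identity `(x + 1)^{3^k} = x^{3^k} + 1`, applying `Φ^{3^k}` adds to
each block its left neighbour, so blocks `c·θ^k(a_m)` become `c·(θ^k(a_{m-1}) + θ^k(a_m))`.
Bijectivity of `θ` makes each column `a ↦ θ^k(a)_t` a permutation of `F_3`, and a permutation
`f` of `F_3` satisfies `f a + f b + f c = 0` whenever `a + b + c = 0`. Hence the new block is
`-c·θ^k(-(a_{m-1} + a_m))`, and induction on `n` gives the sign `(-1)^n`, i.e. `1` or `2`.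
-/

/-- Extension of a substitution `θ` to words, by concatenation. -/
def wordSub (θ : ZMod 3 → List (ZMod 3)) : List (ZMod 3) → List (ZMod 3)
  | [] => []
  | a :: w => θ a ++ wordSub θ w

theorem Nat.exists_eq_mul_add_of_lt_pow_succ {ℓ k t : ℕ} (ht : t < ℓ ^ (k + 1)) :
    ∃ q r, q < ℓ ^ k ∧ r < ℓ ∧ t = ℓ * q + r := by
  have hℓ : 0 < ℓ := Nat.pos_of_ne_zero fun h => by simp [h] at ht
  refine ⟨t / ℓ, t % ℓ, ?_, Nat.mod_lt _ hℓ, (Nat.div_add_mod t ℓ).symm⟩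
  rw [Nat.div_lt_iff_lt_mul hℓ, ← pow_succ]
  exact ht

section wordSub

variable {θ : ZMod 3 → List (ZMod 3)} {ℓ : ℕ}

theorem length_wordSub (hlen : ∀ a, (θ a).length = ℓ) :
    ∀ w, (wordSub θ w).length = ℓ * w.length
  | [] => rfl
  | a :: w => by
    simp only [wordSub, List.length_append, List.length_cons, hlen, length_wordSub hlen w]
    ring

theorem length_iterate_wordSub (hlen : ∀ a, (θ a).length = ℓ) (k : ℕ) (w : List (ZMod 3)) :
    ((wordSub θ)^[k] w).length = ℓ ^ k * w.length := by
  induction k generalizing w with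
  | zero => simp
  | succ k ih => rw [Function.iterate_succ_apply', length_wordSub hlen, ih]; ring

theorem getD_wordSub (hlen : ∀ a, (θ a).length = ℓ) :
    ∀ (w : List (ZMod 3)) (q r : ℕ), q < w.length → r < ℓ →
      (wordSub θ w).getD (ℓ * q + r) 0 = (θ (w.getD q 0)).getD r 0
  | [], _, _, hq, _ => absurd hq (Nat.not_lt_zero _)
  | a :: w, 0, r, _, hr => by
    simp only [wordSub, Nat.mul_zero, Nat.zero_add]
    rw [List.getD_append _ _ _ _ (by rwa [hlen])]
    rfl
  | a :: w, q + 1, r, hq, hr => by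
    have hidx : ℓ * (q + 1) + r = (θ a).length + (ℓ * q + r) := by rw [hlen]; ring
    simp only [wordSub]
    rw [hidx, List.getD_append_right _ _ _ _ (Nat.le_add_right _ _), Nat.add_sub_cancel_left]
    exact getD_wordSub hlen w q r (Nat.lt_of_succ_lt_succ hq) hr

theorem getD_iterate_succ_wordSub (hlen : ∀ a, (θ a).length = ℓ) (k : ℕ) (a : ZMod 3)
    {q r : ℕ} (hq : q < ℓ ^ k) (hr : r < ℓ) :
    ((wordSub θ)^[k + 1] [a]).getD (ℓ * q + r) 0
      = (θ (((wordSub θ)^[k] [a]).getD q 0)).getD r 0 := by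
  rw [Function.iterate_succ_apply']
  exact getD_wordSub hlen _ q r (by rw [length_iterate_wordSub hlen]; simpa using hq) hr

theorem bijective_getD_iterate_wordSub (hlen : ∀ a, (θ a).length = ℓ)
    (hbij : ∀ t < ℓ, Function.Bijective fun a : ZMod 3 => (θ a).getD t 0) :
    ∀ (k : ℕ) {t : ℕ}, t < ℓ ^ k →
      Function.Bijective fun a : ZMod 3 => ((wordSub θ)^[k] [a]).getD t 0
  | 0, t, ht => by
    obtain rfl : t = 0 := by simpa using ht
    exact Function.bijective_id
  | k + 1, _, ht => by
    obtain ⟨q, r, hq, hr, rfl⟩ := Nat.exists_eq_mul_add_of_lt_pow_succ ht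
    simp only [getD_iterate_succ_wordSub hlen k _ hq hr]
    exact (hbij r hr).comp (bijective_getD_iterate_wordSub hlen hbij k hq)

theorem eq_getD_iterate_wordSub_of_fixed (hlen : ∀ a, (θ a).length = ℓ) {u : ℤ → ZMod 3}
    (hfix : ∀ (m : ℤ) (t : ℕ), t < ℓ → u (ℓ * m + t) = (θ (u m)).getD t 0) :
    ∀ (k : ℕ) (m : ℤ) {t : ℕ}, t < ℓ ^ k →
      u (m * ℓ ^ k + t) = ((wordSub θ)^[k] [u m]).getD t 0
  | 0, m, t, ht => by
    obtain rfl : t = 0 := by simpa using ht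
    simp
  | k + 1, m, _, ht => by
    obtain ⟨q, r, hq, hr, rfl⟩ := Nat.exists_eq_mul_add_of_lt_pow_succ ht
    have hidx : m * (ℓ : ℤ) ^ (k + 1) + ((ℓ * q + r : ℕ) : ℤ) = ℓ * (m * ℓ ^ k + q) + r := by
      push_cast; ring
    rw [getD_iterate_succ_wordSub hlen k _ hq hr, hidx, hfix _ r hr,
      eq_getD_iterate_wordSub_of_fixed hlen hfix k m hq]

end wordSub

theorem ZMod.three_bijective_apply_add_apply_add_apply {f : ZMod 3 → ZMod 3}
    (hf : Function.Bijective f) {a b c : ZMod 3} (habc : a + b + c = 0) :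
    f a + f b + f c = 0 := by
  have hsum : f 0 + f 1 + f 2 = 0 := by
    have h : ∑ a : ZMod 3, f a = ∑ b : ZMod 3, b := Fintype.sum_bijective f hf _ _ fun _ => rfl
    exact (Fin.sum_univ_three f).symm.trans (h.trans (by decide))
  have htriple (d : ZMod 3) : f d + f d + f d = 0 := by
    have h3 : (3 : ZMod 3) = 0 := rfl
    linear_combination f d * h3
  -- `a + b + c = 0` forces `a = b = c` or `{a, b, c} = ZMod 3`.
  have hcases (d : ZMod 3) : d = 0 ∨ d = 1 ∨ d = 2 := by decide +revert
  rcases hcases a with rfl | rfl | rfl <;> rcases hcases b with rfl | rfl | rfl <;>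
    rcases hcases c with rfl | rfl | rfl <;>
    first
      | exact absurd habc (by decide)
      | exact htriple _
      | linear_combination hsum

theorem iterate_three_apply_of_shift_add {Ψ : (ℤ → ZMod 3) → ℤ → ZMod 3} {s : ℤ}
    (hΨ : ∀ v m, Ψ v m = v (m - s) + v m) (v : ℤ → ZMod 3) (m : ℤ) :
    Ψ^[3] v m = v (m - 3 * s) + v m := by
  simp only [Function.iterate_succ_apply', Function.iterate_zero_apply, hΨ]
  rw [show m - s - s - s = m - 3 * s by ring]
  have h3 : (3 : ZMod 3) = 0 := rfl
  linear_combination (v (m - s - s) + v (m - s)) * h3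

theorem iterate_pow_three_apply_of_shift_add {Φ : (ℤ → ZMod 3) → ℤ → ZMod 3}
    (hΦ : ∀ v m, Φ v m = v (m - 1) + v m) :
    ∀ (k : ℕ) (v : ℤ → ZMod 3) (m : ℤ), Φ^[3 ^ k] v m = v (m - 3 ^ k) + v m
  | 0 => by simpa using hΦ
  | k + 1 => by
    intro v m
    rw [pow_succ, Function.iterate_mul,
      iterate_three_apply_of_shift_add (iterate_pow_three_apply_of_shift_add hΦ k), pow_succ']

def HasScaledBlocks (θ : ZMod 3 → List (ZMod 3)) (k : ℕ) (c : ZMod 3) (v : ℤ → ZMod 3) :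
    Prop :=
  ∀ m : ℤ, ∃ a : ZMod 3, ∀ t : ℕ, t < 3 ^ k →
    v (m * 3 ^ k + t) = c * ((wordSub θ)^[k] [a]).getD t 0

theorem HasScaledBlocks.iterate_pow_three {θ : ZMod 3 → List (ZMod 3)} {k : ℕ} {c : ZMod 3}
    {v : ℤ → ZMod 3} (hv : HasScaledBlocks θ k c v) (hlen : ∀ a, (θ a).length = 3)
    (hbij : ∀ t < 3, Function.Bijective fun a : ZMod 3 => (θ a).getD t 0)
    {Φ : (ℤ → ZMod 3) → ℤ → ZMod 3} (hΦ : ∀ v m, Φ v m = v (m - 1) + v m) :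
    HasScaledBlocks θ k (-c) (Φ^[3 ^ k] v) := by
  intro m
  obtain ⟨a, ha⟩ := hv m
  obtain ⟨b, hb⟩ := hv (m - 1)
  refine ⟨-(a + b), fun t ht => ?_⟩
  have hcol := ZMod.three_bijective_apply_add_apply_add_apply
    (bijective_getD_iterate_wordSub hlen hbij k ht) (add_neg_cancel (a + b))
  rw [iterate_pow_three_apply_of_shift_add hΦ,
    show m * 3 ^ k + t - 3 ^ k = (m - 1) * 3 ^ k + t by ring, ha t ht, hb t ht]
  linear_combination c * hcol

theorem ledrappier_blocks_general (θ : ZMod 3 → List (ZMod 3))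
    (hlen : ∀ a, (θ a).length = 3)
    (hbij : ∀ t : ℕ, t < 3 → Function.Bijective (fun a : ZMod 3 => (θ a).getD t 0))
    (u : ℤ → ZMod 3)
    (hfix : ∀ (m : ℤ) (t : ℕ), t < 3 → u (3 * m + (t : ℤ)) = (θ (u m)).getD t 0)
    (Φ : (ℤ → ZMod 3) → (ℤ → ZMod 3))
    (hΦ : ∀ (v : ℤ → ZMod 3) (m : ℤ), Φ v m = v (m - 1) + v m) :
    ∀ (k n : ℕ), 1 ≤ k → ∀ m : ℤ, ∃ a : ZMod 3,
      ∀ t : ℕ, t < 3 ^ k →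
        (Φ^[n * 3 ^ k] u) (m * 3 ^ k + (t : ℤ))
          = (if Even n then 1 else 2) * ((wordSub θ)^[k] [a]).getD t 0 := by
  intro k n _
  suffices hblocks : HasScaledBlocks θ k (if Even n then 1 else 2) (Φ^[n * 3 ^ k] u) from hblocks
  have hu : HasScaledBlocks θ k 1 u := fun m =>
    ⟨u m, fun t ht => by rw [one_mul]; exact eq_getD_iterate_wordSub_of_fixed hlen hfix k m ht⟩
  induction n with
  | zero => simpa using hu
  | succ n ih =>
    have hsign : (if Even (n + 1) then 1 else 2 : ZMod 3) = -(if Even n then 1 else 2) := by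
      by_cases hn : Even n <;>
        simp only [Nat.even_add_one, hn, not_true_eq_false, not_false_eq_true, ↓reduceIte] <;> rfl
    rw [hsign, show (n + 1) * 3 ^ k = 3 ^ k + n * 3 ^ k by ring, Function.iterate_add_apply]
    exact ih.iterate_pow_three hlen hbij hΦ

/-- Let `Φ : F_3^ℤ → F_3^ℤ` be the cellular automaton with generating polynomial
`φ(x) = x + 1`, i.e. `(Φ v)_m = v_{m-1} + v_m`.  Let `θ` be a primitive bijective
length-3 substitution on `F_3` and let `u ∈ F_3^ℤ` be a bi-infinite fixed point of `θ`.
Then for each `k ≥ 1`, `n ≥ 0` and `m ∈ ℤ`, the block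
`Φ^{n·3^k}(u)|_{[m·3^k, (m+1)·3^k - 1]}` lies in `{θ^k(0), θ^k(1), θ^k(2)}` if `n` is even
and in `{2θ^k(0), 2θ^k(1), 2θ^k(2)}` if `n` is odd. -/
theorem ledrappier_blocks (θ : ZMod 3 → List (ZMod 3))
    (hlen : ∀ a, (θ a).length = 3)
    (hbij : ∀ t : ℕ, t < 3 → Function.Bijective (fun a : ZMod 3 => (θ a).getD t 0))
    (hprim : ∃ K : ℕ, 1 ≤ K ∧ ∀ a b : ZMod 3, b ∈ (wordSub θ)^[K] [a])
    (u : ℤ → ZMod 3)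
    (hfix : ∀ (m : ℤ) (t : ℕ), t < 3 → u (3 * m + (t : ℤ)) = (θ (u m)).getD t 0)
    (Φ : (ℤ → ZMod 3) → (ℤ → ZMod 3))
    (hΦ : ∀ (v : ℤ → ZMod 3) (m : ℤ), Φ v m = v (m - 1) + v m) :
    ∀ (k n : ℕ), 1 ≤ k → ∀ m : ℤ, ∃ a : ZMod 3,
      ∀ t : ℕ, t < 3 ^ k →
        (Φ^[n * 3 ^ k] u) (m * 3 ^ k + (t : ℤ))
          = (if Even n then 1 else 2) * ((wordSub θ)^[k] [a]).getD t 0 :=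
  ledrappier_blocks_general θ hlen hbij u hfix Φ hΦ
end
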